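/- arXiv:math/0109104 — 7 statements merged into one kernel-verified Lean document; each statement's English description precedes it below -/
import Mathlib

section
/- Let Λ be an m×m symmetric matrix over a commutative ring such that the entries in each row sum to zero. Then for any p, q ∈ {1,...,m}, the determinant of the submatrix obtained by deleting the p-th row and p-th column equals the determinant of the submatrix obtained by deleting the q-th row and q-th column. -/
/-- If the rows of `A` sum to zero (as a vector), then the determinant of `A` with a row
replaced by a fixed vector `v` does not depend on which row is replaced. -/
lemma det_updateRow_indep {R : Type*} [CommRing R] {n : Type*} [Fintype n] [DecidableEq n]
    (A : Matrix n n R) (hA : ∑ k, A k = 0) (v : n → R) (j j' : n) :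
    (A.updateRow j v).det = (A.updateRow j' v).det := by
  rcases eq_or_ne j j' with rfl | hne
  · rfl
  set M := A.updateRow j v with hM
  set D := A.updateRow j' v with hD
  have hMk : ∀ k, k ≠ j → M k = A k := fun k hk => Matrix.updateRow_ne hk
  -- coefficients for expressing row j' of M as a combination
  set c : n → R := fun k => if k = j ∨ k = j' then 0 else -1 with hc
  have hrow : M j' = (∑ k, c k • M k) + (-1 : R) • A j := by
    have h1 : M j' = A j' := Matrix.updateRow_ne (Ne.symm hne)
    have h2 : (∑ k, c k • M k) = ∑ k, c k • A k := by
      apply Finset.sum_congr rfl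
      intro k _
      rcases eq_or_ne k j with rfl | hk
      · simp [hc]
      · rw [hMk k hk]
    rw [h1, h2]
    have h3 : (∑ k, c k • A k) = -(∑ k, A k) + A j' + A j := by
      have : ∀ k, c k • A k = -A k + (if k = j then A j else 0) + (if k = j' then A j' else 0) := by
        intro k
        rcases eq_or_ne k j with rfl | hkj
        · simp [hc, hne]
        · rcases eq_or_ne k j' with rfl | hkj'
          · simp [hc, hkj]
          · simp [hc, hkj, hkj']
      simp_rw [this]
      funext l
      show (∑ k, fun l => (-A k + (if k = j then A j else 0) + (if k = j' then A j' else 0)) l) l = (-(∑ k, fun l => A k l) + A j' + A j) l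
      simp [Finset.sum_apply, Finset.sum_add_distrib, ite_apply]
      abel
    rw [h3, hA]
    funext l
    simp
  have key : M.det = c j' * M.det + (-1 : R) * (M.updateRow j' (A j)).det := by
    conv_lhs => rw [← Matrix.updateRow_eq_self M j', hrow]
    rw [Matrix.det_updateRow_add, Matrix.det_updateRow_sum, Matrix.det_updateRow_smul]
    simp [smul_eq_mul]
  have hcj' : c j' = 0 := by simp [hc]
  rw [hcj', zero_mul, zero_add, neg_one_mul] at key
  -- now relate (M.updateRow j' (A j)) to D via a row swap
  have hswap : M.updateRow j' (A j) = D.submatrix (Equiv.swap j j') id := by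
    ext k l
    rcases eq_or_ne k j' with rfl | hkj'
    · simp [Matrix.updateRow_self, Matrix.submatrix_apply, Equiv.swap_apply_right, hD,
        Matrix.updateRow_ne hne]
    · rw [Matrix.updateRow_ne hkj']
      rcases eq_or_ne k j with rfl | hkj
      · simp [hM, Matrix.updateRow_self, Matrix.submatrix_apply, Equiv.swap_apply_left, hD,
          Matrix.updateRow_self]
      · simp [hM, Matrix.updateRow_ne hkj, Matrix.submatrix_apply,
          Equiv.swap_apply_of_ne_of_ne hkj hkj', hD, Matrix.updateRow_ne hkj,
          Matrix.updateRow_ne hkj']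
  rw [hswap, Matrix.det_permute, Equiv.Perm.sign_swap hne] at key
  simpa using key

theorem adjugate_entry_const {R : Type*} [CommRing R] {n : Type*} [Fintype n] [DecidableEq n]
    (Λ : Matrix n n R) (hsymm : Λ.transpose = Λ) (hrow : ∀ i, ∑ j, Λ i j = 0)
    (p q : n) : Λ.adjugate p p = Λ.adjugate q q := by
  have hsum : ∑ k, Λ k = 0 := by
    funext l
    have : ∑ k, Λ k l = ∑ k, Λ l k := by
      apply Finset.sum_congr rfl
      intro k _
      conv_lhs => rw [← hsymm]
      rfl
    show (∑ k, fun j => Λ k j) l = 0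
    rw [Finset.sum_apply]
    simpa [this] using hrow l
  have step1 : ∀ i j j' : n, Λ.adjugate i j = Λ.adjugate i j' := by
    intro i j j'
    rw [Matrix.adjugate_apply, Matrix.adjugate_apply]
    exact det_updateRow_indep Λ hsum _ j j'
  have hadjsymm : Λ.adjugate p q = Λ.adjugate q p := by
    have := Λ.adjugate_transpose
    rw [hsymm] at this
    calc Λ.adjugate p q = Λ.adjugate.transpose q p := rfl
      _ = Λ.adjugate q p := by rw [this]
  calc Λ.adjugate p p = Λ.adjugate p q := step1 p p q
    _ = Λ.adjugate q p := hadjsymm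
    _ = Λ.adjugate q q := step1 q p q

/-- For a symmetric `(m+1) × (m+1)` matrix `Λ` over a commutative ring whose
rows each sum to zero, the determinant of the submatrix obtained by deleting the `p`-th row
and column is independent of `p`. -/
theorem det_delete_eq_of_symm_rowsum_zero {R : Type*} [CommRing R] {m : ℕ}
    (Λ : Matrix (Fin (m + 1)) (Fin (m + 1)) R)
    (hsymm : Λ.transpose = Λ)
    (hrow : ∀ i, ∑ j, Λ i j = 0)
    (p q : Fin (m + 1)) :
    (Λ.submatrix p.succAbove p.succAbove).det =
      (Λ.submatrix q.succAbove q.succAbove).det := by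
  have h1 := Matrix.adjugate_fin_succ_eq_det_submatrix Λ p p
  have h2 := Matrix.adjugate_fin_succ_eq_det_submatrix Λ q q
  have hp : ((-1 : R)) ^ (p + p : ℕ) = 1 := by
    rw [← two_mul, pow_mul]; norm_num
  have hq : ((-1 : R)) ^ (q + q : ℕ) = 1 := by
    rw [← two_mul, pow_mul]; norm_num
  rw [hp, one_mul] at h1
  rw [hq, one_mul] at h2
  rw [← h1, ← h2]
  exact adjugate_entry_const Λ hsymm hrow p q
end

section
/- Let Λ be a symmetric m×m matrix over a commutative ring whose rows each sum to zero. Then all entries of the adjugate matrix adj(Λ) are equal. -/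
/-!
Row sums zero means `Λ *ᵥ 1 = 0`. The cofactor `adj(Λ) i j` is the determinant of `Λ` with
row `j` replaced by `eᵢ`, so `adj(Λ) i j - adj(Λ) i' j` is the determinant of `Λ` with row `j`
replaced by `eᵢ - eᵢ'`. That matrix still kills `1`, and a matrix with a kernel vector having a
unit entry is singular (multiply by its adjugate). Hence every column of `adj(Λ)` is constant;
as `adj(Λ)` is symmetric along with `Λ`, so is every row.
-/

namespace Matrix

variable {n R : Type*} [Fintype n] [DecidableEq n] [CommRing R]

theorem det_eq_zero_of_mulVec_one_eq_zero [Nonempty n] {A : Matrix n n R} (hA : A *ᵥ 1 = 0) :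
    A.det = 0 :=
  det_eq_zero_of_mulVec_eq_zero_of_mem_nonZeroDivisors hA (i := Classical.arbitrary n)
    (one_mem _)

theorem adjugate_apply_eq_of_mulVec_one_eq_zero {A : Matrix n n R} (hA : A *ᵥ 1 = 0)
    (i i' j : n) : A.adjugate i j = A.adjugate i' j := by
  have : Nonempty n := ⟨j⟩
  have hsingular : (A.updateRow j (Pi.single i 1 - Pi.single i' 1)).det = 0 := by
    refine det_eq_zero_of_mulVec_one_eq_zero ?_
    rw [updateRow_mulVec, hA, sub_dotProduct, single_one_dotProduct, single_one_dotProduct]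
    simp
  have hsplit := det_updateRow_add A j (Pi.single i 1 - Pi.single i' 1) (Pi.single i' 1)
  rw [sub_add_cancel, hsingular, zero_add] at hsplit
  rw [adjugate_apply, adjugate_apply, hsplit]

end Matrix

/-- For a symmetric `m × m` matrix `Λ` over a commutative ring whose rows each
sum to zero, all entries of the adjugate matrix `adj(Λ)` are equal. -/
theorem adjugate_entries_eq_of_symm_rowsum_zero {R : Type*} [CommRing R] {m : ℕ}
    (Λ : Matrix (Fin m) (Fin m) R)
    (hsymm : Λ.transpose = Λ)
    (hrow : ∀ i, ∑ j, Λ i j = 0)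
    (i j k l : Fin m) :
    Λ.adjugate i j = Λ.adjugate k l := by
  have hker : Λ.mulVec 1 = 0 := funext fun r ↦ by simpa [Matrix.mulVec, dotProduct] using hrow r
  have hadj : Λ.adjugate.IsSymm := Matrix.IsSymm.adjugate hsymm
  calc Λ.adjugate i j = Λ.adjugate k j := Λ.adjugate_apply_eq_of_mulVec_one_eq_zero hker i k j
    _ = Λ.adjugate j k := hadj.apply j k
    _ = Λ.adjugate l k := Λ.adjugate_apply_eq_of_mulVec_one_eq_zero hker j l k
    _ = Λ.adjugate k l := hadj.apply k l
end

section
/- Let T be a 3-graph with n edges and 2n+1 vertices. Fix, for each edge e, a nontrivial cyclic permutation σ(e) of its 3-element vertex set v(e) (viewed as a permutation of V(T) fixing all other vertices), and fix an ordering of the edges. Then T is a tree if and only if the product σ(T) = ∏_{e∈E(T)} σ(e) is a cyclic permutation of the full vertex set V(T) (a (2n+1)-cycle). -/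
/-- A `3`-graph (3-uniform hypergraph): a vertex type `V`, an edge type `E`, and a map
assigning to each edge a `3`-element set of vertices. -/
structure ThreeGraph (V : Type*) (E : Type*) [DecidableEq V] where
  verts : E → Finset V
  card_verts : ∀ e, (verts e).card = 3

/-- The topological realization of a `3`-graph: the bipartite incidence graph on `V ⊕ E`,
joining a vertex `w` to an edge `e` whenever `w` is an endpoint of `e`. -/
def ThreeGraph.incidence {V E : Type*} [DecidableEq V] (G : ThreeGraph V E) :
    SimpleGraph (V ⊕ E) where
  Adj x y :=
    (∃ w e, x = Sum.inl w ∧ y = Sum.inr e ∧ w ∈ G.verts e) ∨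
    (∃ w e, x = Sum.inr e ∧ y = Sum.inl w ∧ w ∈ G.verts e)
  symm := by
    constructor
    rintro x y (⟨w, e, rfl, rfl, h⟩ | ⟨w, e, rfl, rfl, h⟩)
    · exact Or.inr ⟨w, e, rfl, rfl, h⟩
    · exact Or.inl ⟨w, e, rfl, rfl, h⟩
  loopless := by
    constructor
    rintro x (⟨w, e, rfl, h2, _⟩ | ⟨w, e, rfl, h2, _⟩) <;> simp at h2

/-- `σ` is a cyclic permutation of the whole (finite) type it acts on: it acts transitively,
i.e. it is a single cycle through all the elements (a full-length cycle). -/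
def IsFullCycle {V : Type*} (σ : Equiv.Perm V) : Prop :=
  ∀ x y : V, ∃ k : ℕ, (σ ^ k) x = y


open Equiv Relation

namespace ThreeGraphAux

variable {V : Type*}

/-- The symmetric relation generated by a list of pairs. -/
def pairRel (ps : List (V × V)) (x y : V) : Prop :=
  ∃ p ∈ ps, (x = p.1 ∧ y = p.2) ∨ (x = p.2 ∧ y = p.1)

/-- Join of an equivalence relation with one extra pair `(a, b)`. -/
def joinRel (s : V → V → Prop) (a b x y : V) : Prop :=
  s x y ∨ (s x a ∧ s b y) ∨ (s x b ∧ s a y)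

lemma joinRel_equivalence {s : V → V → Prop} (hs : Equivalence s) (a b : V) :
    Equivalence (joinRel s a b) := by
  constructor
  · intro x; exact Or.inl (hs.refl x)
  · rintro x y (h | ⟨h1, h2⟩ | ⟨h1, h2⟩)
    · exact Or.inl (hs.symm h)
    · exact Or.inr (Or.inr ⟨hs.symm h2, hs.symm h1⟩)
    · exact Or.inr (Or.inl ⟨hs.symm h2, hs.symm h1⟩)
  · rintro x y z (h | ⟨h1, h2⟩ | ⟨h1, h2⟩) (g | ⟨g1, g2⟩ | ⟨g1, g2⟩)
    · exact Or.inl (hs.trans h g)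
    · exact Or.inr (Or.inl ⟨hs.trans h g1, g2⟩)
    · exact Or.inr (Or.inr ⟨hs.trans h g1, g2⟩)
    · exact Or.inr (Or.inl ⟨h1, hs.trans h2 g⟩)
    · exact Or.inr (Or.inl ⟨h1, g2⟩)
    · exact Or.inl (hs.trans h1 g2)
    · exact Or.inr (Or.inr ⟨h1, hs.trans h2 g⟩)
    · exact Or.inl (hs.trans h1 g2)
    · exact Or.inr (Or.inr ⟨h1, g2⟩)

lemma pairRel_mono_cons (p : V × V) (ps : List (V × V)) :
    ∀ a b, pairRel ps a b → pairRel (p :: ps) a b := by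
  rintro a b ⟨q, hq, h⟩
  exact ⟨q, List.mem_cons_of_mem _ hq, h⟩

lemma eqvGen_nil_iff {x y : V} : EqvGen (pairRel ([] : List (V × V))) x y ↔ x = y := by
  constructor
  · intro h
    induction h with
    | rel u v h => obtain ⟨p, hp, -⟩ := h; exact absurd hp List.not_mem_nil
    | refl u => rfl
    | symm u v _ ih => exact ih.symm
    | trans u v w _ _ ih1 ih2 => exact ih1.trans ih2
  · rintro rfl; exact EqvGen.refl x

lemma eqvGen_cons_iff (p : V × V) (ps : List (V × V)) (x y : V) :
    EqvGen (pairRel (p :: ps)) x y ↔ joinRel (EqvGen (pairRel ps)) p.1 p.2 x y := by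
  have hJ := joinRel_equivalence (EqvGen.is_equivalence (pairRel ps)) p.1 p.2
  constructor
  · intro h
    induction h with
    | rel u v h =>
      obtain ⟨q, hq, hor⟩ := h
      rcases List.mem_cons.1 hq with rfl | hq
      · rcases hor with ⟨rfl, rfl⟩ | ⟨rfl, rfl⟩
        · exact Or.inr (Or.inl ⟨EqvGen.refl _, EqvGen.refl _⟩)
        · exact Or.inr (Or.inr ⟨EqvGen.refl _, EqvGen.refl _⟩)
      · exact Or.inl (EqvGen.rel _ _ ⟨q, hq, hor⟩)
    | refl u => exact hJ.refl u
    | symm u v _ ih => exact hJ.symm ih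
    | trans u v w _ _ ih1 ih2 => exact hJ.trans ih1 ih2
  · have hab : EqvGen (pairRel (p :: ps)) p.1 p.2 :=
      EqvGen.rel _ _ ⟨p, List.mem_cons_self, Or.inl ⟨rfl, rfl⟩⟩
    rintro (h | ⟨h1, h2⟩ | ⟨h1, h2⟩)
    · exact h.mono (pairRel_mono_cons p ps)
    · exact ((h1.mono (pairRel_mono_cons p ps)).trans _ _ _ hab).trans _ _ _
        (h2.mono (pairRel_mono_cons p ps))
    · exact ((h1.mono (pairRel_mono_cons p ps)).trans _ _ _ (hab.symm _ _)).trans _ _ _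
        (h2.mono (pairRel_mono_cons p ps))

lemma eqvGen_cons_of_rel {p : V × V} {ps : List (V × V)}
    (hr : EqvGen (pairRel ps) p.1 p.2) (x y : V) :
    EqvGen (pairRel (p :: ps)) x y ↔ EqvGen (pairRel ps) x y := by
  rw [eqvGen_cons_iff]
  constructor
  · rintro (h | ⟨h1, h2⟩ | ⟨h1, h2⟩)
    · exact h
    · exact (h1.trans _ _ _ hr).trans _ _ _ h2
    · exact (h1.trans _ _ _ (hr.symm _ _)).trans _ _ _ h2
  · exact Or.inl

/-- The quotient of `V` by the equivalence generated by a list of pairs. -/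
abbrev PQ (ps : List (V × V)) : Type _ := Quotient (EqvGen.setoid (pairRel ps))

/-- The natural map between quotients when a pair is added. -/
def consMap (p : V × V) (ps : List (V × V)) : PQ ps → PQ (p :: ps) :=
  Quotient.map' id (fun a b h => h.mono (pairRel_mono_cons p ps))

lemma consMap_mk (p : V × V) (ps : List (V × V)) (x : V) :
    consMap p ps (Quotient.mk _ x) = Quotient.mk _ x := rfl

lemma card_quot_cons [Finite V] (p : V × V) (ps : List (V × V)) :
    Nat.card (PQ ps) ≤ Nat.card (PQ (p :: ps)) + 1 := by
  classical
  set A : PQ ps := Quotient.mk _ p.1 with hA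
  have hF : Function.Injective (fun q : PQ ps =>
      if q = A then (Sum.inr () : PQ (p :: ps) ⊕ Unit) else Sum.inl (consMap p ps q)) := by
    intro q1 q2 h
    by_cases h1 : q1 = A
    · by_cases h2 : q2 = A
      · exact h1.trans h2.symm
      · simp [h1, h2] at h
    · by_cases h2 : q2 = A
      · simp [h1, h2] at h
      · simp only [h1, h2, if_false, Sum.inl.injEq] at h
        induction q1 using Quotient.inductionOn' with | h x =>
        induction q2 using Quotient.inductionOn' with | h y =>
        have hxy : EqvGen (pairRel (p :: ps)) x y := Quotient.exact' h
        rcases (eqvGen_cons_iff p ps x y).1 hxy with hh | ⟨hh1, hh2⟩ | ⟨hh1, hh2⟩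
        · exact Quotient.sound' hh
        · exact absurd (Quotient.sound' hh1) h1
        · exact absurd (Quotient.sound' (hh2.symm _ _)) h2
  have := Nat.card_le_card_of_injective _ hF
  simpa [Nat.card_sum] using this

lemma card_le_quot_add_length [Finite V] (ps : List (V × V)) :
    Nat.card V ≤ Nat.card (PQ ps) + ps.length := by
  induction ps with
  | nil =>
    simp only [List.length_nil, Nat.add_zero]
    refine Nat.card_le_card_of_injective (Quotient.mk _) (fun x y h => ?_)
    exact eqvGen_nil_iff.1 (Quotient.exact h)
  | cons p ps ih =>
    calc Nat.card V ≤ Nat.card (PQ ps) + ps.length := ih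
      _ ≤ (Nat.card (PQ (p :: ps)) + 1) + ps.length :=
          Nat.add_le_add_right (card_quot_cons p ps) _
      _ = Nat.card (PQ (p :: ps)) + (p :: ps).length := by
          simp [List.length_cons]; ring

/-- Forest condition on a list of pairs: each pair joins two classes not already joined
by the later pairs. -/
def ListForest : List (V × V) → Prop
  | [] => True
  | p :: ps => ¬ EqvGen (pairRel ps) p.1 p.2 ∧ ListForest ps

lemma forest_of_card [Finite V] :
    ∀ ps : List (V × V), Nat.card (PQ ps) + ps.length ≤ Nat.card V → ListForest ps := by
  intro ps
  induction ps with
  | nil => intro _; trivial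
  | cons p ps ih =>
    intro h
    have hle := card_le_quot_add_length (V := V) ps
    have hcons := card_quot_cons p ps
    simp only [List.length_cons] at h
    constructor
    · intro hr
      have hinj : Function.Injective (consMap p ps) := by
        intro q1 q2 hq
        induction q1 using Quotient.inductionOn' with | h x =>
        induction q2 using Quotient.inductionOn' with | h y =>
        have hxy : EqvGen (pairRel (p :: ps)) x y := Quotient.exact' hq
        exact Quotient.sound' ((eqvGen_cons_of_rel hr x y).1 hxy)
      have := Nat.card_le_card_of_injective _ hinj
      omega
    · exact ih (by omega)

section Perm

variable {V : Type*} [DecidableEq V]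

/-- Product of the transpositions attached to a list of pairs. -/
def swapProd (ps : List (V × V)) : Equiv.Perm V :=
  (ps.map fun p => Equiv.swap p.1 p.2).prod

@[simp] lemma swapProd_nil : swapProd ([] : List (V × V)) = 1 := rfl

lemma swapProd_cons (p : V × V) (ps : List (V × V)) :
    swapProd (p :: ps) = Equiv.swap p.1 p.2 * swapProd ps := by
  simp [swapProd]

lemma swapProd_append (l1 l2 : List (V × V)) :
    swapProd (l1 ++ l2) = swapProd l1 * swapProd l2 := by
  simp [swapProd]

lemma eqvGen_swapProd_apply (ps : List (V × V)) (x : V) :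
    EqvGen (pairRel ps) x (swapProd ps x) := by
  induction ps generalizing x with
  | nil => simpa using EqvGen.refl x
  | cons p ps ih =>
    have h1 : EqvGen (pairRel (p :: ps)) x (swapProd ps x) :=
      (ih x).mono (pairRel_mono_cons p ps)
    have h2 : EqvGen (pairRel (p :: ps)) (swapProd ps x)
        (Equiv.swap p.1 p.2 (swapProd ps x)) := by
      set z := swapProd ps x
      by_cases hz1 : z = p.1
      · rw [hz1, Equiv.swap_apply_left]
        exact EqvGen.rel _ _ ⟨p, List.mem_cons_self, Or.inl ⟨rfl, rfl⟩⟩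
      · by_cases hz2 : z = p.2
        · rw [hz2, Equiv.swap_apply_right]
          exact EqvGen.rel _ _ ⟨p, List.mem_cons_self, Or.inr ⟨rfl, rfl⟩⟩
        · rw [Equiv.swap_apply_of_ne_of_ne hz1 hz2]
          exact EqvGen.refl _
    rw [swapProd_cons, Equiv.Perm.mul_apply]
    exact h1.trans _ _ _ h2

lemma eqvGen_swapProd_pow (ps : List (V × V)) (x : V) (k : ℕ) :
    EqvGen (pairRel ps) x ((swapProd ps ^ k) x) := by
  induction k with
  | zero => simpa using EqvGen.refl x
  | succ k ih =>
    have : (swapProd ps ^ (k + 1)) x = swapProd ps ((swapProd ps ^ k) x) := by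
      rw [pow_succ', Equiv.Perm.mul_apply]
    rw [this]
    exact ih.trans _ _ _ (eqvGen_swapProd_apply ps ((swapProd ps ^ k) x))

lemma exists_pow_swap_mul_eq [Finite V] {π : Equiv.Perm V} {a b : V}
    (hab : ¬ π.SameCycle a b) : ∃ k : ℕ, ((Equiv.swap a b * π) ^ k) b = a := by
  by_contra h
  push_neg at h
  set σ := Equiv.swap a b * π with hσ
  have key : ∀ k : ℕ, (σ ^ k) b = (π ^ k) b ∧ (0 < k → (π ^ k) b ≠ b) := by
    intro k
    induction k with
    | zero => exact ⟨rfl, by simp⟩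
    | succ k ih =>
      have h1 : (σ ^ (k + 1)) b = Equiv.swap a b ((π ^ (k + 1)) b) := by
        rw [pow_succ', Equiv.Perm.mul_apply, ih.1, hσ, Equiv.Perm.mul_apply,
          ← Equiv.Perm.mul_apply π, ← pow_succ']
      have hna : (π ^ (k + 1)) b ≠ a := by
        intro hh
        exact hab (Equiv.Perm.SameCycle.symm ⟨((k : ℤ) + 1), by
          rw [← zpow_natCast π (k + 1)] at hh; exact_mod_cast hh⟩)
      have hnb : (π ^ (k + 1)) b ≠ b := by
        intro hh
        apply h (k + 1)
        rw [h1, hh, Equiv.swap_apply_right]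
      exact ⟨by rw [h1, Equiv.swap_apply_of_ne_of_ne hna hnb], fun _ => hnb⟩
  have hord : 0 < orderOf π := orderOf_pos π
  have hfix : (π ^ orderOf π) b = b := by rw [pow_orderOf_eq_one]; rfl
  exact (key (orderOf π)).2 hord hfix

lemma sameCycle_swap_mul_iff [Finite V] {π : Equiv.Perm V} {a b : V}
    (hab : ¬ π.SameCycle a b) (x y : V) :
    (Equiv.swap a b * π).SameCycle x y ↔ joinRel π.SameCycle a b x y := by
  set σ := Equiv.swap a b * π with hσ
  obtain ⟨m, hm⟩ := exists_pow_swap_mul_eq hab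
  have hba : σ.SameCycle b a := ⟨(m : ℤ), by rw [zpow_natCast]; exact hm⟩
  have hSCπ : Equivalence π.SameCycle :=
    ⟨Equiv.Perm.SameCycle.refl π, Equiv.Perm.SameCycle.symm, Equiv.Perm.SameCycle.trans⟩
  have hJ := joinRel_equivalence hSCπ a b
  have happly : ∀ {f : Equiv.Perm V} (z : V), f.SameCycle z (f z) :=
    fun {f} z => ⟨1, by simp⟩
  have hπsub : ∀ z, σ.SameCycle z (π z) := by
    intro z
    by_cases h1 : π z = a
    · have hz : σ z = b := by rw [hσ, Equiv.Perm.mul_apply, h1, Equiv.swap_apply_left]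
      have hzb : σ.SameCycle z b := hz ▸ happly z
      rw [h1]
      exact hzb.trans hba
    · by_cases h2 : π z = b
      · have hz : σ z = a := by rw [hσ, Equiv.Perm.mul_apply, h2, Equiv.swap_apply_right]
        have hza : σ.SameCycle z a := hz ▸ happly z
        rw [h2]
        exact hza.trans hba.symm
      · have hz : σ z = π z := by
          rw [hσ, Equiv.Perm.mul_apply, Equiv.swap_apply_of_ne_of_ne h1 h2]
        exact hz ▸ happly z
  have hπ : ∀ {u v : V}, π.SameCycle u v → σ.SameCycle u v := by
    intro u v huv
    obtain ⟨i, -, -, hi⟩ := huv.exists_pow_eq''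
    have : ∀ k : ℕ, σ.SameCycle u ((π ^ k) u) := by
      intro k
      induction k with
      | zero => exact Equiv.Perm.SameCycle.refl σ u
      | succ k ih =>
        have hrw : (π ^ (k + 1)) u = π ((π ^ k) u) := by
          rw [pow_succ', Equiv.Perm.mul_apply]
        rw [hrw]
        exact ih.trans (hπsub _)
    rw [← hi]
    exact this i
  have hstep : ∀ z, joinRel π.SameCycle a b z (σ z) := by
    intro z
    by_cases h1 : π z = a
    · have hz : σ z = b := by rw [hσ, Equiv.Perm.mul_apply, h1, Equiv.swap_apply_left]
      rw [hz]
      exact Or.inr (Or.inl ⟨h1 ▸ happly z, Equiv.Perm.SameCycle.refl π b⟩)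
    · by_cases h2 : π z = b
      · have hz : σ z = a := by rw [hσ, Equiv.Perm.mul_apply, h2, Equiv.swap_apply_right]
        rw [hz]
        exact Or.inr (Or.inr ⟨h2 ▸ happly z, Equiv.Perm.SameCycle.refl π a⟩)
      · have hz : σ z = π z := by
          rw [hσ, Equiv.Perm.mul_apply, Equiv.swap_apply_of_ne_of_ne h1 h2]
        exact Or.inl (hz ▸ happly z)
  constructor
  · intro hxy
    obtain ⟨i, -, -, hi⟩ := hxy.exists_pow_eq''
    have : ∀ k : ℕ, joinRel π.SameCycle a b x ((σ ^ k) x) := by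
      intro k
      induction k with
      | zero => exact hJ.refl x
      | succ k ih =>
        have hrw : (σ ^ (k + 1)) x = σ ((σ ^ k) x) := by
          rw [pow_succ', Equiv.Perm.mul_apply]
        rw [hrw]
        exact hJ.trans ih (hstep _)
    rw [← hi]
    exact this i
  · rintro (h | ⟨h1, h2⟩ | ⟨h1, h2⟩)
    · exact hπ h
    · exact ((hπ h1).trans hba.symm).trans (hπ h2)
    · exact ((hπ h1).trans hba).trans (hπ h2)

lemma sameCycle_swapProd [Finite V] :
    ∀ ps : List (V × V), ListForest ps →
      ∀ x y : V, (swapProd ps).SameCycle x y ↔ EqvGen (pairRel ps) x y := by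
  intro ps
  induction ps with
  | nil =>
    intro _ x y
    rw [swapProd_nil, Equiv.Perm.sameCycle_one, eqvGen_nil_iff]
  | cons p ps ih =>
    rintro ⟨hne, hf⟩ x y
    have IH := ih hf
    have hnsc : ¬ (swapProd ps).SameCycle p.1 p.2 := fun h => hne ((IH _ _).1 h)
    rw [swapProd_cons, sameCycle_swap_mul_iff hnsc, eqvGen_cons_iff]
    simp only [joinRel, IH]

end Perm
section Graph

open SimpleGraph

lemma reachable_rec {U : Type*} {G : SimpleGraph U} {S : U → U → Prop}
    (hrefl : ∀ x, S x x) (htrans : ∀ {x y z}, S x y → S y z → S x z)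
    (hadj : ∀ {x y}, G.Adj x y → S x y) {u v : U} (h : G.Reachable u v) : S u v := by
  obtain ⟨w⟩ := h
  induction w with
  | nil => exact hrefl _
  | cons h p ih => exact htrans (hadj h) ih

lemma card_le_of_connected {U : Type*} [Fintype U] [DecidableEq U] {G : SimpleGraph U}
    (hc : G.Connected) : Fintype.card U ≤ Nat.card G.edgeSet + 1 := by
  classical
  letI : Fintype G.edgeSet := Fintype.ofFinite _
  set qs : List (U × U) := G.edgeFinset.toList.map Quot.out with hqs
  have hlen : qs.length = Nat.card G.edgeSet := by
    rw [hqs, List.length_map, Finset.length_toList, SimpleGraph.edgeFinset_card,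
      Nat.card_eq_fintype_card]
  have hadj : ∀ {x y : U}, G.Adj x y → EqvGen (pairRel qs) x y := by
    intro x y hxy
    have hmem : s(x, y) ∈ G.edgeFinset.toList := by
      rw [Finset.mem_toList, SimpleGraph.mem_edgeFinset]; exact hxy
    have hin : Quot.out s(x, y) ∈ qs := by
      rw [hqs]; exact List.mem_map_of_mem hmem
    have hout : Sym2.mk (Quot.out s(x, y)).1 (Quot.out s(x, y)).2 = s(x, y) := Quot.out_eq _
    rw [show Sym2.mk (Quot.out s(x,y)).1 (Quot.out s(x,y)).2 = s((Quot.out s(x,y)).1, (Quot.out s(x,y)).2) from rfl,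
      Sym2.eq_iff] at hout
    rcases hout with ⟨h1, h2⟩ | ⟨h1, h2⟩
    · exact EqvGen.rel _ _ ⟨_, hin, Or.inl ⟨h1.symm, h2.symm⟩⟩
    · exact EqvGen.rel _ _ ⟨_, hin, Or.inr ⟨h2.symm, h1.symm⟩⟩
  have htotal : ∀ x y : U, EqvGen (pairRel qs) x y := fun x y =>
    reachable_rec EqvGen.refl (fun h1 h2 => h1.trans _ _ _ h2) hadj (hc.preconnected x y)
  have hsub : Nat.card (PQ qs) ≤ 1 := by
    have hss : Subsingleton (PQ qs) := by
      constructor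
      intro q1 q2
      induction q1 using Quotient.inductionOn' with | h x =>
      induction q2 using Quotient.inductionOn' with | h y =>
      exact Quotient.sound' (htotal x y)
    have : Function.Injective (fun _ : PQ qs => (() : Unit)) :=
      fun a b _ => Subsingleton.elim a b
    simpa using Nat.card_le_card_of_injective _ this
  calc Fintype.card U = Nat.card U := Nat.card_eq_fintype_card.symm
    _ ≤ Nat.card (PQ qs) + qs.length := card_le_quot_add_length qs
    _ ≤ 1 + Nat.card G.edgeSet := by rw [hlen]; omega
    _ = Nat.card G.edgeSet + 1 := by omega

lemma isAcyclic_of_connected_card {U : Type*} [Fintype U] [DecidableEq U] {G : SimpleGraph U}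
    (hc : G.Connected) (hcard : Nat.card G.edgeSet + 1 ≤ Fintype.card U) : G.IsAcyclic := by
  rw [SimpleGraph.isAcyclic_iff_forall_adj_isBridge]
  intro v w hvw
  by_contra hnb
  rw [SimpleGraph.isBridge_iff] at hnb
  push_neg at hnb
  have hreach : (G \ SimpleGraph.fromEdgeSet {s(v, w)}).Reachable v w := hnb
  set G' := G \ SimpleGraph.fromEdgeSet {s(v, w)} with hG'
  have hconn' : G'.Connected := by
    rw [SimpleGraph.connected_iff]
    refine ⟨fun x y => ?_, hc.nonempty⟩
    refine reachable_rec (fun z => Reachable.refl z) (fun h1 h2 => h1.trans h2) ?_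
      (hc.preconnected x y)
    intro a b hab
    by_cases he : s(a, b) = s(v, w)
    · rcases Sym2.eq_iff.1 he with ⟨rfl, rfl⟩ | ⟨rfl, rfl⟩
      · exact hreach
      · exact hreach.symm
    · refine SimpleGraph.Adj.reachable ?_
      rw [hG', SimpleGraph.sdiff_adj, SimpleGraph.fromEdgeSet_adj]
      exact ⟨hab, fun hcon => he (Set.mem_singleton_iff.1 hcon.1)⟩
  have hedge' : G'.edgeSet = G.edgeSet \ {s(v, w)} := by
    rw [hG', SimpleGraph.edgeSet_sdiff, SimpleGraph.edgeSet_fromEdgeSet,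
      SimpleGraph.edgeSet_sdiff_sdiff_isDiag]
  have hmem : s(v, w) ∈ G.edgeSet := hvw
  have hcard' : Nat.card G'.edgeSet = Nat.card G.edgeSet - 1 := by
    rw [Nat.card_coe_set_eq, Nat.card_coe_set_eq, hedge',
      Set.ncard_diff_singleton_of_mem hmem]
  have h1 := card_le_of_connected hconn'
  have hpos : 0 < Nat.card G.edgeSet := by
    rw [Nat.card_coe_set_eq]
    exact (Set.ncard_pos (Set.toFinite _)).2 ⟨_, hmem⟩
  omega

end Graph
section ThreeCycle

variable {V : Type*} [DecidableEq V] [Fintype V]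

lemma card_PQ_le_one_of_total {ps : List (V × V)}
    (h : ∀ x y : V, EqvGen (pairRel ps) x y) : Nat.card (PQ ps) ≤ 1 := by
  have hss : Subsingleton (PQ ps) := by
    constructor
    intro q1 q2
    induction q1 using Quotient.inductionOn' with | h x =>
    induction q2 using Quotient.inductionOn' with | h y =>
    exact Quotient.sound' (h x y)
  have hinj : Function.Injective (fun _ : PQ ps => (() : Unit)) :=
    fun a b _ => Subsingleton.elim a b
  simpa using Nat.card_le_card_of_injective _ hinj

lemma threeCycle_decomp {f : Equiv.Perm V} (hf : f.IsThreeCycle)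
    {x : V} (hx : x ∈ f.support) :
    f.support = {x, f x, f (f x)} ∧ f = Equiv.swap x (f (f x)) * Equiv.swap x (f x) := by
  have hfx : f x ≠ x := Equiv.Perm.mem_support.1 hx
  have hf3 : f ^ 3 = 1 := by rw [← hf.orderOf]; exact pow_orderOf_eq_one f
  have hfff : f (f (f x)) = x := by
    have h := Equiv.ext_iff.1 hf3 x
    simpa [pow_succ, Equiv.Perm.mul_apply] using h
  have h2 : f (f x) ≠ f x := fun h => hfx (f.injective h)
  have h21 : f (f x) ≠ x := by
    intro h
    have h' : f (f (f x)) = f x := congrArg f h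
    rw [hfff] at h'
    exact hfx h'.symm
  have hsub : ({x, f x, f (f x)} : Finset V) ⊆ f.support := by
    intro y hy
    simp only [Finset.mem_insert, Finset.mem_singleton] at hy
    rcases hy with rfl | rfl | rfl
    · exact hx
    · exact Equiv.Perm.apply_mem_support.2 hx
    · exact Equiv.Perm.apply_mem_support.2 (Equiv.Perm.apply_mem_support.2 hx)
  have hcard3 : ({x, f x, f (f x)} : Finset V).card = 3 := by
    rw [Finset.card_insert_of_notMem, Finset.card_insert_of_notMem, Finset.card_singleton]
    · simp only [Finset.mem_singleton]; exact h2.symm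
    · simp only [Finset.mem_insert, Finset.mem_singleton]
      push_neg
      exact ⟨Ne.symm hfx, Ne.symm h21⟩
  have hsupp : f.support = {x, f x, f (f x)} :=
    (Finset.eq_of_subset_of_card_le hsub (by rw [hf.card_support, hcard3])).symm
  refine ⟨hsupp, ?_⟩
  ext y
  rw [Equiv.Perm.mul_apply]
  by_cases hy1 : y = x
  · subst hy1
    rw [Equiv.swap_apply_left, Equiv.swap_apply_of_ne_of_ne hfx (Ne.symm h2)]
  · by_cases hy2 : y = f x
    · subst hy2
      rw [Equiv.swap_apply_right, Equiv.swap_apply_left]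
    · by_cases hy3 : y = f (f x)
      · subst hy3
        rw [Equiv.swap_apply_of_ne_of_ne h21 h2, Equiv.swap_apply_right, hfff]
      · have hyfix : f y = y := by
          apply Equiv.Perm.notMem_support.1
          rw [hsupp]
          simp [hy1, hy2, hy3]
        rw [hyfix, Equiv.swap_apply_of_ne_of_ne hy1 hy2,
          Equiv.swap_apply_of_ne_of_ne hy1 hy3]

end ThreeCycle
end ThreeGraphAux


open Relation ThreeGraphAux in
/-- Let `T` be a `3`-graph with `n` edges and `2n+1` vertices. Fix for each edge
`e` a nontrivial cyclic permutation `σ e` of its `3`-element vertex set (a `3`-cycle supported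
on `v(e)`), and fix an ordering of the edges (a list `L` enumerating `E` without repetition).
Then `T` is a tree if and only if the product `∏_{e ∈ L} σ e` is a cyclic permutation of the
full vertex set (a `(2n+1)`-cycle). -/
theorem threeGraph_isTree_iff_prod_isFullCycle {V E : Type*} [DecidableEq V] [Fintype V]
    [Fintype E] (G : ThreeGraph V E) (n : ℕ)
    (hE : Fintype.card E = n) (hV : Fintype.card V = 2 * n + 1)
    (σ : E → Equiv.Perm V)
    (hσ : ∀ e, (σ e).IsThreeCycle ∧ (σ e).support = G.verts e)
    (L : List E) (hnd : L.Nodup) (hall : ∀ e, e ∈ L) :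
    G.incidence.IsTree ↔ IsFullCycle (L.map σ).prod := by
  classical
  have hV1 : Nat.card V = 2 * n + 1 := by rw [Nat.card_eq_fintype_card, hV]
  have hVne : Nonempty V := Fintype.card_pos_iff.1 (by omega)
  have hsne : ∀ e, (σ e).support.Nonempty := by
    intro e
    rw [(hσ e).2, ← Finset.card_pos, G.card_verts]
    omega
  set ae : E → V := fun e => (hsne e).choose with hae
  have haemem : ∀ e, ae e ∈ (σ e).support := fun e => (hsne e).choose_spec
  have hanat := fun e => threeCycle_decomp (hσ e).1 (haemem e)
  set pairsOf : E → List (V × V) :=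
    fun e => [(ae e, σ e (σ e (ae e))), (ae e, σ e (ae e))] with hpairsOf
  set ps : List (V × V) := L.flatMap pairsOf with hps
  -- product identity
  have hswap_pairsOf : ∀ e, swapProd (pairsOf e) = σ e := by
    intro e
    rw [hpairsOf]
    simp only [swapProd, List.map_cons, List.map_nil, List.prod_cons, List.prod_nil, mul_one]
    exact (hanat e).2.symm
  have hprodAux : ∀ l : List E, swapProd (l.flatMap pairsOf) = (l.map σ).prod := by
    intro l
    induction l with
    | nil => simp [swapProd]
    | cons e l ih =>
      rw [List.flatMap_cons, swapProd_append, ih, hswap_pairsOf, List.map_cons, List.prod_cons]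
  have hprod : swapProd ps = (L.map σ).prod := hprodAux L
  -- lengths
  have hlenL : L.length = n := by
    have huniv : L.toFinset = Finset.univ := Finset.eq_univ_iff_forall.2 (by simpa using hall)
    have hh := List.toFinset_card_of_nodup hnd
    rw [huniv, Finset.card_univ, hE] at hh
    exact hh.symm
  have hlenps : ps.length = 2 * n := by
    rw [hps]
    have hgen : ∀ l : List E, (l.flatMap pairsOf).length = 2 * l.length := by
      intro l
      induction l with
      | nil => simp
      | cons e l ih =>
        rw [List.flatMap_cons, List.length_append, ih, hpairsOf]
        simp [List.length_cons]
        ring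
    rw [hgen, hlenL]
  -- membership facts
  have hvmem : ∀ e, ae e ∈ G.verts e := fun e => by rw [← (hσ e).2]; exact haemem e
  have hvmem2 : ∀ e, σ e (ae e) ∈ G.verts e := fun e => by
    rw [← (hσ e).2]; exact Equiv.Perm.apply_mem_support.2 (haemem e)
  have hvmem3 : ∀ e, σ e (σ e (ae e)) ∈ G.verts e := fun e => by
    rw [← (hσ e).2]
    exact Equiv.Perm.apply_mem_support.2 (Equiv.Perm.apply_mem_support.2 (haemem e))
  have hmem_pairs : ∀ p ∈ ps, ∃ e : E, p.1 ∈ G.verts e ∧ p.2 ∈ G.verts e := by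
    intro p hp
    rw [hps, List.mem_flatMap] at hp
    obtain ⟨e, -, hpe⟩ := hp
    rw [hpairsOf] at hpe
    simp only [List.mem_cons, List.not_mem_nil, or_false] at hpe
    rcases hpe with rfl | rfl
    · exact ⟨e, hvmem e, hvmem3 e⟩
    · exact ⟨e, hvmem e, hvmem2 e⟩
  have hpair1 : ∀ e, (ae e, σ e (σ e (ae e))) ∈ ps := by
    intro e
    rw [hps, List.mem_flatMap]
    exact ⟨e, hall e, by rw [hpairsOf]; simp⟩
  have hpair2 : ∀ e, (ae e, σ e (ae e)) ∈ ps := by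
    intro e
    rw [hps, List.mem_flatMap]
    exact ⟨e, hall e, by rw [hpairsOf]; simp⟩
  have hvert_rel : ∀ e, ∀ w ∈ G.verts e, EqvGen (pairRel ps) w (ae e) := by
    intro e w hw
    rw [← (hσ e).2, (hanat e).1] at hw
    simp only [Finset.mem_insert, Finset.mem_singleton] at hw
    rcases hw with rfl | rfl | rfl
    · exact EqvGen.refl _
    · exact EqvGen.rel _ _ ⟨_, hpair2 e, Or.inr ⟨rfl, rfl⟩⟩
    · exact EqvGen.rel _ _ ⟨_, hpair1 e, Or.inr ⟨rfl, rfl⟩⟩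
  -- connectivity iff
  have hconn_iff : G.incidence.Connected ↔ ∀ x y : V, EqvGen (pairRel ps) x y := by
    constructor
    · intro hc x y
      refine reachable_rec (G := G.incidence)
        (S := fun u v => EqvGen (pairRel ps) (Sum.elim id ae u) (Sum.elim id ae v))
        (fun u => EqvGen.refl _) (fun h1 h2 => h1.trans _ _ _ h2) ?_
        (hc.preconnected (Sum.inl x) (Sum.inl y))
      rintro u v (⟨w, e, rfl, rfl, hw⟩ | ⟨w, e, rfl, rfl, hw⟩)
      · exact hvert_rel e w hw
      · exact (hvert_rel e w hw).symm _ _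
    · intro h
      rw [SimpleGraph.connected_iff]
      have hVreach : ∀ x y : V, G.incidence.Reachable (Sum.inl x) (Sum.inl y) := by
        intro x y
        have hxy := h x y
        induction hxy with
        | rel u v huv =>
          obtain ⟨p, hp, hor⟩ := huv
          obtain ⟨e, h1, h2⟩ := hmem_pairs p hp
          have r1 : G.incidence.Adj (Sum.inl p.1) (Sum.inr e) := Or.inl ⟨p.1, e, rfl, rfl, h1⟩
          have r2 : G.incidence.Adj (Sum.inr e) (Sum.inl p.2) := Or.inr ⟨p.2, e, rfl, rfl, h2⟩
          have hr : G.incidence.Reachable (Sum.inl p.1) (Sum.inl p.2) :=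
            r1.reachable.trans r2.reachable
          rcases hor with ⟨rfl, rfl⟩ | ⟨rfl, rfl⟩
          · exact hr
          · exact hr.symm
        | refl u => exact SimpleGraph.Reachable.refl _
        | symm u v _ ih => exact ih.symm
        | trans u v w _ _ ih1 ih2 => exact ih1.trans ih2
      have hEreach : ∀ e : E, G.incidence.Reachable (Sum.inr e) (Sum.inl (ae e)) :=
        fun e => SimpleGraph.Adj.reachable (Or.inr ⟨ae e, e, rfl, rfl, hvmem e⟩)
      refine ⟨?_, ⟨Sum.inl hVne.some⟩⟩
      rintro (x | e) (y | e')
      · exact hVreach x y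
      · exact (hVreach x (ae e')).trans (hEreach e').symm
      · exact (hEreach e).trans (hVreach (ae e) y)
      · exact ((hEreach e).trans (hVreach (ae e) (ae e'))).trans (hEreach e').symm
  -- edge count bound
  have hcount : Nat.card G.incidence.edgeSet ≤ 3 * n := by
    have hex : ∀ z : G.incidence.edgeSet, ∃ we : V × E,
        z.1 = s(Sum.inl we.1, Sum.inr we.2) ∧ we.1 ∈ G.verts we.2 := by
      rintro ⟨z, hz⟩
      have hout : Sym2.mk (Quot.out z).1 (Quot.out z).2 = z := Quot.out_eq z
      have hadj : G.incidence.Adj (Quot.out z).1 (Quot.out z).2 := by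
        rw [← SimpleGraph.mem_edgeSet,
          show s((Quot.out z).1, (Quot.out z).2) = Sym2.mk (Quot.out z).1 (Quot.out z).2 from rfl, hout]
        exact hz
      rcases hadj with ⟨w, e, h1, h2, hw⟩ | ⟨w, e, h1, h2, hw⟩
      · refine ⟨(w, e), ?_, hw⟩
        show z = _
        have hzz : z = s((Quot.out z).1, (Quot.out z).2) := hout.symm
        rw [h1, h2] at hzz
        exact hzz
      · refine ⟨(w, e), ?_, hw⟩
        show z = _
        have hzz : z = s((Quot.out z).1, (Quot.out z).2) := hout.symm
        rw [h1, h2, Sym2.eq_swap] at hzz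
        exact hzz
    choose F hF1 hF2 using hex
    have hinj : Function.Injective (fun z : G.incidence.edgeSet =>
        (⟨F z, hF2 z⟩ : {q : V × E // q.1 ∈ G.verts q.2})) := by
      intro z1 z2 h
      have hFeq : F z1 = F z2 := Subtype.ext_iff.1 h
      apply Subtype.ext
      rw [hF1 z1, hF1 z2, hFeq]
    have hcard_sub : Nat.card {q : V × E // q.1 ∈ G.verts q.2} = 3 * n := by
      have hequiv : {q : V × E // q.1 ∈ G.verts q.2} ≃ Σ e : E, {w : V // w ∈ G.verts e} :=
        { toFun := fun q => ⟨q.1.2, q.1.1, q.2⟩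
          invFun := fun s => ⟨(s.2.1, s.1), s.2.2⟩
          left_inv := fun ⟨⟨w, e⟩, hq⟩ => rfl
          right_inv := fun ⟨e, w, hw⟩ => rfl }
      rw [Nat.card_congr hequiv, Nat.card_eq_fintype_card, Fintype.card_sigma]
      have : ∀ e : E, Fintype.card {w : V // w ∈ G.verts e} = 3 := by
        intro e
        rw [Fintype.card_coe, G.card_verts]
      rw [Finset.sum_congr rfl (fun e _ => this e), Finset.sum_const, smul_eq_mul,
        Finset.card_univ, hE]
      ring
    calc Nat.card G.incidence.edgeSet ≤ Nat.card {q : V × E // q.1 ∈ G.verts q.2} :=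
          Nat.card_le_card_of_injective _ hinj
      _ = 3 * n := hcard_sub
  -- tree iff connected
  have htree_iff : G.incidence.IsTree ↔ G.incidence.Connected := by
    constructor
    · exact fun h => h.isConnected
    · intro hc
      refine ⟨hc, isAcyclic_of_connected_card hc ?_⟩
      have hcardsum : Fintype.card (V ⊕ E) = 3 * n + 1 := by
        rw [Fintype.card_sum, hV, hE]; ring
      omega
  rw [htree_iff, hconn_iff]
  constructor
  · intro htotal x y
    have hforest : ListForest ps :=
      forest_of_card ps (by rw [hlenps, hV1]; have := card_PQ_le_one_of_total htotal; omega)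
    have hsc := (sameCycle_swapProd ps hforest x y).2 (htotal x y)
    obtain ⟨i, -, -, hi⟩ := hsc.exists_pow_eq''
    exact ⟨i, by rw [← hprod]; exact hi⟩
  · intro hfc x y
    obtain ⟨k, hk⟩ := hfc x y
    rw [← hprod] at hk
    have hgen := eqvGen_swapProd_pow ps x k
    rw [hk] at hgen
    exact hgen
end

section
/- Let T be a 3-graph with n edges and 2n+1 vertices. If for some ordering of the edges and some choice of 3-cycles σ(e) on the edge vertex sets the product ∏_e σ(e) is a (2n+1)-cycle of V(T), then for any other ordering of the edges the product is also a (2n+1)-cycle. -/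
section DenesAux

variable {V : Type*} [DecidableEq V] [Fintype V]

/-- The product of the transpositions recorded in a list of pairs. -/
def swapProd (S : List (V × V)) : Equiv.Perm V :=
  (S.map fun p => Equiv.swap p.1 p.2).prod

/-- The connectivity relation of the graph whose edges are the pairs in `S`. -/
def lrel (S : List (V × V)) : V → V → Prop :=
  Relation.EqvGen fun x y => (x, y) ∈ S

lemma lrel_equivalence (S : List (V × V)) : Equivalence (lrel S) :=
  Relation.EqvGen.is_equivalence _

lemma lrel_of_mem {S : List (V × V)} {p : V × V} (hp : p ∈ S) : lrel S p.1 p.2 :=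
  Relation.EqvGen.rel _ _ (by simpa using hp)

lemma lrel_closed {S : List (V × V)} {R : V → V → Prop} (hR : Equivalence R)
    (hgen : ∀ p ∈ S, R p.1 p.2) {x y : V} (hxy : lrel S x y) : R x y := by
  have hxy' : Relation.EqvGen (fun x y => (x, y) ∈ S) x y := hxy
  clear hxy
  induction hxy' with
  | rel a b h => exact hgen (a, b) h
  | refl a => exact hR.refl a
  | symm a b _ ih => exact hR.symm ih
  | trans a b c _ _ ih1 ih2 => exact hR.trans ih1 ih2

lemma lrel_mono {S T : List (V × V)} (h : ∀ p ∈ S, lrel T p.1 p.2) {x y : V}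
    (hxy : lrel S x y) : lrel T x y :=
  lrel_closed (lrel_equivalence T) h hxy

lemma lrel_apply (S : List (V × V)) (x : V) : lrel S x (swapProd S x) := by
  induction S generalizing x with
  | nil => simpa [swapProd] using (lrel_equivalence ([] : List (V × V))).refl x
  | cons p S ih =>
    have h1 : swapProd (p :: S) x = Equiv.swap p.1 p.2 (swapProd S x) := by
      simp [swapProd]
    have h2 : lrel (p :: S) x (swapProd S x) :=
      lrel_mono (fun q hq => lrel_of_mem (List.mem_cons_of_mem _ hq)) (ih x)
    have hz : lrel (p :: S) (swapProd S x) (Equiv.swap p.1 p.2 (swapProd S x)) := by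
      rcases eq_or_ne (swapProd S x) p.1 with he | hne1
      · rw [he, Equiv.swap_apply_left]
        exact lrel_of_mem (List.mem_cons_self)
      · rcases eq_or_ne (swapProd S x) p.2 with he | hne2
        · rw [he, Equiv.swap_apply_right]
          exact (lrel_equivalence _).symm (lrel_of_mem (List.mem_cons_self))
        · rw [Equiv.swap_apply_of_ne_of_ne hne1 hne2]
          exact (lrel_equivalence _).refl _
    rw [h1]
    exact (lrel_equivalence _).trans h2 hz

lemma lrel_pow (S : List (V × V)) (k : ℕ) (x : V) :
    lrel S x ((swapProd S ^ k) x) := by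
  induction k with
  | zero => simpa using (lrel_equivalence S).refl x
  | succ k ih =>
    rw [show (swapProd S ^ (k + 1)) x = swapProd S ((swapProd S ^ k) x) by
      rw [pow_succ']; rfl]
    exact (lrel_equivalence S).trans ih (lrel_apply S _)

lemma sameCycle_lrel {S : List (V × V)} {x y : V}
    (h : (swapProd S).SameCycle x y) : lrel S x y := by
  obtain ⟨i, -, rfl⟩ := h.exists_pow_eq'
  exact lrel_pow S i x

lemma perm_pow_succ_apply (h : Equiv.Perm V) (m : ℕ) (z : V) :
    (h ^ (m + 1)) z = h ((h ^ m) z) := by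
  rw [pow_succ']
  rfl

lemma merge_aux {f : Equiv.Perm V} {a b : V} (hab : ¬ f.SameCycle a b) {x : V}
    (hxa : f.SameCycle x a) : ∃ k : ℕ, ((Equiv.swap a b * f) ^ k) x = b := by
  classical
  obtain ⟨j, -, hja⟩ := hxa.exists_pow_eq'
  have hex : ∃ k, 0 < k ∧ (f ^ k) x = a := by
    rcases Nat.eq_zero_or_pos j with h0 | h0
    · refine ⟨orderOf f, orderOf_pos f, ?_⟩
      subst h0
      simp only [pow_zero, Equiv.Perm.coe_one, id_eq] at hja
      rw [pow_orderOf_eq_one]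
      simpa using hja
    · exact ⟨j, h0, hja⟩
  set k := Nat.find hex with hk
  obtain ⟨hkpos, hka⟩ := Nat.find_spec hex
  set g := Equiv.swap a b * f with hg
  have key : ∀ i, i < k → (g ^ i) x = (f ^ i) x := by
    intro i hi
    induction i with
    | zero => simp
    | succ i ih =>
      have hik : i < k := Nat.lt_of_succ_lt hi
      have h1 : (g ^ (i + 1)) x = Equiv.swap a b ((f ^ (i + 1)) x) := by
        calc (g ^ (i + 1)) x = g ((g ^ i) x) := perm_pow_succ_apply g i x
          _ = g ((f ^ i) x) := by rw [ih hik]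
          _ = Equiv.swap a b (f ((f ^ i) x)) := rfl
          _ = Equiv.swap a b ((f ^ (i + 1)) x) := by rw [perm_pow_succ_apply f i x]
      have hna : (f ^ (i + 1)) x ≠ a := by
        intro hc
        exact Nat.find_min hex hi ⟨Nat.succ_pos i, hc⟩
      have hnb : (f ^ (i + 1)) x ≠ b := by
        intro hc
        have hxb : f.SameCycle x b := ⟨(i + 1 : ℕ), by rw [zpow_natCast]; exact hc⟩
        exact hab (hxa.symm.trans hxb)
      rw [h1, Equiv.swap_apply_of_ne_of_ne hna hnb]
  refine ⟨k, ?_⟩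
  obtain ⟨k', hk'⟩ : ∃ k', k = k' + 1 := ⟨k - 1, (Nat.succ_pred_eq_of_pos hkpos).symm⟩
  have hfin : (g ^ k) x = Equiv.swap a b ((f ^ k) x) := by
    rw [hk']
    calc (g ^ (k' + 1)) x = g ((g ^ k') x) := perm_pow_succ_apply g k' x
      _ = g ((f ^ k') x) := by rw [key k' (by omega)]
      _ = Equiv.swap a b (f ((f ^ k') x)) := rfl
      _ = Equiv.swap a b ((f ^ (k' + 1)) x) := by rw [perm_pow_succ_apply f k' x]
  rw [hfin, hka, Equiv.swap_apply_left]

lemma merge {f : Equiv.Perm V} {a b : V} (hab : ¬ f.SameCycle a b) :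
    (∀ x y, f.SameCycle x y → (Equiv.swap a b * f).SameCycle x y)
    ∧ (Equiv.swap a b * f).SameCycle a b := by
  set g := Equiv.swap a b * f with hg
  have toB : ∀ x, f.SameCycle x a → g.SameCycle x b := by
    intro x hxa
    obtain ⟨k, hk⟩ := merge_aux hab hxa
    exact ⟨(k : ℕ), by simpa [zpow_natCast] using hk⟩
  have toA : ∀ x, f.SameCycle x b → g.SameCycle x a := by
    intro x hxb
    have hba : ¬ f.SameCycle b a := fun hc => hab hc.symm
    obtain ⟨k, hk⟩ := merge_aux hba hxb
    rw [Equiv.swap_comm b a] at hk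
    exact ⟨(k : ℕ), by simpa [zpow_natCast] using hk⟩
  have untouched : ∀ x y, f.SameCycle x y → ¬ f.SameCycle x a → ¬ f.SameCycle x b →
      g.SameCycle x y := by
    intro x y hxy hxa hxb
    obtain ⟨i, -, rfl⟩ := hxy.exists_pow_eq'
    have key : ∀ i : ℕ, (g ^ i) x = (f ^ i) x := by
      intro i
      induction i with
      | zero => simp
      | succ i ih =>
        have hna : (f ^ (i + 1)) x ≠ a := by
          intro hc
          exact hxa ⟨(i + 1 : ℕ), by rw [zpow_natCast]; exact hc⟩
        have hnb : (f ^ (i + 1)) x ≠ b := by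
          intro hc
          exact hxb ⟨(i + 1 : ℕ), by rw [zpow_natCast]; exact hc⟩
        calc (g ^ (i + 1)) x = g ((g ^ i) x) := perm_pow_succ_apply g i x
          _ = g ((f ^ i) x) := by rw [ih]
          _ = Equiv.swap a b (f ((f ^ i) x)) := rfl
          _ = Equiv.swap a b ((f ^ (i + 1)) x) := by rw [perm_pow_succ_apply f i x]
          _ = (f ^ (i + 1)) x := Equiv.swap_apply_of_ne_of_ne hna hnb
    exact ⟨(i : ℕ), by simpa [zpow_natCast] using key i⟩
  refine ⟨?_, toB a (Equiv.Perm.SameCycle.refl f a)⟩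
  intro x y hxy
  by_cases hxa : f.SameCycle x a
  · exact (toB x hxa).trans (toB y (hxy.symm.trans hxa)).symm
  · by_cases hxb : f.SameCycle x b
    · exact (toA x hxb).trans (toA y (hxy.symm.trans hxb)).symm
    · exact untouched x y hxy hxa hxb

lemma card_le_quot (S : List (V × V)) :
    Fintype.card V ≤
      S.length + Nat.card (Quotient (Relation.EqvGen.setoid fun x y : V => (x, y) ∈ S)) := by
  induction S with
  | nil =>
    have hbij : Function.Bijective
        (Quotient.mk (Relation.EqvGen.setoid fun x y : V => (x, y) ∈ ([] : List (V × V)))) := by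
      constructor
      · intro a b hab
        exact lrel_closed (S := ([] : List (V × V))) eq_equivalence (by simp)
          (Quotient.exact hab)
      · intro q
        exact ⟨q.out, Quotient.out_eq q⟩
    have := Nat.card_eq_of_bijective _ hbij
    simp only [List.length_nil, Nat.zero_add]
    rw [← this, Nat.card_eq_fintype_card]
  | cons p S ih =>
    classical
    set s' : Setoid V := Relation.EqvGen.setoid fun x y : V => (x, y) ∈ S with hs'
    set s : Setoid V := Relation.EqvGen.setoid fun x y : V => (x, y) ∈ (p :: S) with hs
    have hmono : ∀ a b : V, s'.r a b → s.r a b := fun a b h =>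
      lrel_mono (S := S) (T := p :: S)
        (fun q hq => lrel_of_mem (List.mem_cons_of_mem _ hq)) h
    let q : Quotient s' → Quotient s :=
      Quotient.lift (Quotient.mk s) (fun a b hab => Quotient.sound (hmono a b hab))
    have split : ∀ u w : V, lrel (p :: S) u w →
        lrel S u w ∨ (lrel S u p.1 ∧ lrel S p.2 w) ∨ (lrel S u p.2 ∧ lrel S p.1 w) := by
      intro u w huw
      have eqv := lrel_equivalence (V := V) S
      refine lrel_closed (R := fun u w => lrel S u w ∨ (lrel S u p.1 ∧ lrel S p.2 w) ∨
        (lrel S u p.2 ∧ lrel S p.1 w)) ?_ ?_ huw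
      · constructor
        · intro a
          exact Or.inl (eqv.refl a)
        · rintro _ _ (h | ⟨h1, h2⟩ | ⟨h1, h2⟩)
          · exact Or.inl (eqv.symm h)
          · exact Or.inr (Or.inr ⟨eqv.symm h2, eqv.symm h1⟩)
          · exact Or.inr (Or.inl ⟨eqv.symm h2, eqv.symm h1⟩)
        · rintro _ _ _ (h | ⟨h1, h2⟩ | ⟨h1, h2⟩) (h' | ⟨h1', h2'⟩ | ⟨h1', h2'⟩)
          · exact Or.inl (eqv.trans h h')
          · exact Or.inr (Or.inl ⟨eqv.trans h h1', h2'⟩)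
          · exact Or.inr (Or.inr ⟨eqv.trans h h1', h2'⟩)
          · exact Or.inr (Or.inl ⟨h1, eqv.trans h2 h'⟩)
          · exact Or.inr (Or.inl ⟨h1, h2'⟩)
          · exact Or.inl (eqv.trans h1 h2')
          · exact Or.inr (Or.inr ⟨h1, eqv.trans h2 h'⟩)
          · exact Or.inl (eqv.trans h1 h2')
          · exact Or.inr (Or.inr ⟨h1, h2'⟩)
      · intro r hr
        rcases List.mem_cons.1 hr with rfl | hr
        · exact Or.inr (Or.inl ⟨eqv.refl _, eqv.refl _⟩)
        · exact Or.inl (lrel_of_mem hr)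
    have hinj : Function.Injective (fun x : Quotient s' =>
        if x = Quotient.mk s' p.2 then (Sum.inr () : Quotient s ⊕ Unit)
        else Sum.inl (q x)) := by
      intro x y hxy
      dsimp only at hxy
      by_cases hx : x = Quotient.mk s' p.2 <;> by_cases hy : y = Quotient.mk s' p.2
      · rw [hx, hy]
      · rw [if_pos hx, if_neg hy] at hxy
        exact absurd hxy (by simp)
      · rw [if_neg hx, if_pos hy] at hxy
        exact absurd hxy (by simp)
      · rw [if_neg hx, if_neg hy] at hxy
        have hq : q x = q y := Sum.inl.inj hxy
        obtain ⟨u, rfl⟩ := Quotient.exists_rep x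
        obtain ⟨w, rfl⟩ := Quotient.exists_rep y
        have huw : lrel (p :: S) u w := Quotient.exact hq
        rcases split u w huw with h | ⟨h1, h2⟩ | ⟨h1, h2⟩
        · exact Quotient.sound h
        · exact absurd (Quotient.sound ((lrel_equivalence S).symm h2) :
            (Quotient.mk s' w) = Quotient.mk s' p.2) hy
        · exact absurd (Quotient.sound h1 :
            (Quotient.mk s' u) = Quotient.mk s' p.2) hx
    have hcard : Nat.card (Quotient s') ≤ Nat.card (Quotient s) + 1 := by
      have h := Nat.card_le_card_of_injective _ hinj
      rwa [Nat.card_sum, Nat.card_eq_fintype_card (α := Unit), Fintype.card_unit] at h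
    calc Fintype.card V ≤ S.length + Nat.card (Quotient s') := ih
      _ ≤ S.length + (Nat.card (Quotient s) + 1) := by omega
      _ = (p :: S).length + Nat.card (Quotient s) := by
          simp [List.length_cons]; omega

lemma quot_card_le_one {S : List (V × V)} (h : ∀ x y : V, lrel S x y) :
    Nat.card (Quotient (Relation.EqvGen.setoid fun x y : V => (x, y) ∈ S)) ≤ 1 := by
  have hsub : Subsingleton (Quotient (Relation.EqvGen.setoid fun x y : V => (x, y) ∈ S)) := by
    constructor
    intro a b
    obtain ⟨u, rfl⟩ := Quotient.exists_rep a
    obtain ⟨w, rfl⟩ := Quotient.exists_rep b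
    exact Quotient.sound (h u w)
  exact Finite.card_le_one_iff_subsingleton.mpr hsub

/-- Dénes's theorem, one direction: if the list of transpositions contains no edge whose
endpoints are already joined by later edges (a "forest" condition reading right-to-left),
then the product joins everything that the graph joins. -/
lemma denes (S : List (V × V))
    (hforest : ∀ A pr B, S = A ++ pr :: B → ¬ lrel B pr.1 pr.2) :
    ∀ x y : V, lrel S x y → (swapProd S).SameCycle x y := by
  induction S with
  | nil =>
    intro x y hxy
    have : x = y := lrel_closed (S := ([] : List (V × V))) eq_equivalence (by simp) hxy
    subst this
    exact Equiv.Perm.SameCycle.refl _ _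
  | cons p S ih =>
    have hforest' : ∀ A pr B, S = A ++ pr :: B → ¬ lrel B pr.1 pr.2 := by
      intro A pr B hS
      exact hforest (p :: A) pr B (by rw [hS]; rfl)
    have hp : ¬ lrel S p.1 p.2 := hforest [] p S rfl
    have hIH := ih hforest'
    have hnc : ¬ (swapProd S).SameCycle p.1 p.2 := fun h => hp (sameCycle_lrel h)
    obtain ⟨hmerge, hab⟩ := merge hnc
    have hgs : swapProd (p :: S) = Equiv.swap p.1 p.2 * swapProd S := by
      simp [swapProd]
    intro x y hxy
    rw [hgs]
    set g := Equiv.swap p.1 p.2 * swapProd S with hg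
    have heq : Equivalence (g.SameCycle) :=
      ⟨fun a => Equiv.Perm.SameCycle.refl g a, fun h => h.symm, fun h h' => h.trans h'⟩
    refine lrel_closed heq ?_ hxy
    intro r hr
    rcases List.mem_cons.1 hr with rfl | hr
    · exact hab
    · exact hmerge _ _ (hIH _ _ (lrel_of_mem hr))

end DenesAux

/-- Let `T` be a `3`-graph with `n` edges and `2n+1` vertices, with a chosen
`3`-cycle `σ e` on the vertex set of each edge `e`. If for some ordering `L₁` of the edges the
product of the `σ e` is a `(2n+1)`-cycle of `V`, then for any other ordering `L₂` the product
is also a `(2n+1)`-cycle. -/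
theorem threeGraph_prod_isFullCycle_order_independent {V E : Type*} [DecidableEq V] [Fintype V]
    [Fintype E] (G : ThreeGraph V E) (n : ℕ)
    (hE : Fintype.card E = n) (hV : Fintype.card V = 2 * n + 1)
    (σ : E → Equiv.Perm V)
    (hσ : ∀ e, (σ e).IsThreeCycle ∧ (σ e).support = G.verts e)
    (L₁ L₂ : List E) (hnd₁ : L₁.Nodup) (hall₁ : ∀ e, e ∈ L₁)
    (hnd₂ : L₂.Nodup) (hall₂ : ∀ e, e ∈ L₂)
    (h : IsFullCycle (L₁.map σ).prod) :
    IsFullCycle (L₂.map σ).prod := by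
  classical
  -- Step 1: decompose each 3-cycle into two transpositions.
  have hdec : ∀ e : E, ∃ p q : V × V,
      σ e = Equiv.swap p.1 p.2 * Equiv.swap q.1 q.2 := by
    intro e
    obtain ⟨h3, -⟩ := hσ e
    set f := σ e with hf
    have hcard : f.support.card = 3 := h3.card_support
    obtain ⟨a, ha⟩ : ∃ a, a ∈ f.support := by
      rcases Finset.card_pos.1 (by rw [hcard]; norm_num) with ⟨a, ha⟩
      exact ⟨a, ha⟩
    set b := f a with hb
    set c := f b with hc
    have hfa : f a ≠ a := Equiv.Perm.mem_support.1 ha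
    have hbmem : b ∈ f.support := Equiv.Perm.apply_mem_support.2 ha
    have hcmem : c ∈ f.support := Equiv.Perm.apply_mem_support.2 hbmem
    have hba : b ≠ a := hfa
    have hcb : c ≠ b := Equiv.Perm.mem_support.1 hbmem
    have hord : orderOf f = 3 := h3.orderOf
    have hf3 : f ^ 3 = 1 := by rw [← hord]; exact pow_orderOf_eq_one f
    have hf3a : f (f (f a)) = a := by
      have : (f ^ 3) a = a := by rw [hf3]; rfl
      simpa [pow_succ, Equiv.Perm.mul_apply] using this
    have hfc : f c = a := by
      have hcc : f c = f (f (f a)) := by rw [hc, hb]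
      rw [hcc, hf3a]
    have hca : c ≠ a := fun hcontr => hfa (hcontr ▸ hfc)
    have hsupp : f.support = {a, b, c} := by
      have hsub : ({a, b, c} : Finset V) ⊆ f.support := by
        intro x hx
        simp only [Finset.mem_insert, Finset.mem_singleton] at hx
        rcases hx with rfl | rfl | rfl
        · exact ha
        · exact hbmem
        · exact hcmem
      have hcard3 : ({a, b, c} : Finset V).card = 3 := by
        rw [Finset.card_insert_of_notMem (by simp [hba.symm, hca.symm]),
          Finset.card_insert_of_notMem (by simp [hcb.symm]), Finset.card_singleton]
      exact (Finset.eq_of_subset_of_card_le hsub (by rw [hcard, hcard3])).symm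
    refine ⟨(a, c), (a, b), ?_⟩
    ext x
    simp only [Equiv.Perm.mul_apply]
    rcases eq_or_ne x a with rfl | hxa
    · rw [Equiv.swap_apply_left, Equiv.swap_apply_of_ne_of_ne hba (Ne.symm hcb)]
    · rcases eq_or_ne x b with rfl | hxb
      · rw [Equiv.swap_apply_right, Equiv.swap_apply_left, ← hc]
      · rcases eq_or_ne x c with rfl | hxc
        · rw [Equiv.swap_apply_of_ne_of_ne hca hcb, Equiv.swap_apply_right, hfc]
        · rw [Equiv.swap_apply_of_ne_of_ne hxa hxb, Equiv.swap_apply_of_ne_of_ne hxa hxc]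
          have : x ∉ f.support := by
            rw [hsupp]
            simp [hxa, hxb, hxc]
          exact Equiv.Perm.notMem_support.1 this
  choose P Q hPQ using hdec
  set Dl : E → List (V × V) := fun e => [P e, Q e] with hDl
  set SL : List E → List (V × V) := fun L => (L.map Dl).flatten with hSL
  have hprod : ∀ L : List E, swapProd (SL L) = (L.map σ).prod := by
    intro L
    induction L with
    | nil => simp [swapProd, hSL]
    | cons e L ih =>
      have h1 : SL (e :: L) = Dl e ++ SL L := by simp [hSL]
      have h2 : swapProd (Dl e ++ SL L) = swapProd (Dl e) * swapProd (SL L) := by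
        simp [swapProd]
      have h3 : swapProd (Dl e) = σ e := by
        simp [swapProd, hDl, hPQ e]
      rw [h1, h2, h3, ih, List.map_cons, List.prod_cons]
  have hmem : ∀ (L : List E) (p : V × V), p ∈ SL L ↔ ∃ e ∈ L, p = P e ∨ p = Q e := by
    intro L p
    simp only [hSL, List.mem_flatten, List.mem_map]
    constructor
    · rintro ⟨l, ⟨e, he, rfl⟩, hp⟩
      rcases List.mem_cons.1 hp with rfl | hp
      · exact ⟨e, he, Or.inl rfl⟩
      · rcases List.mem_cons.1 hp with rfl | hp
        · exact ⟨e, he, Or.inr rfl⟩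
        · simp at hp
    · rintro ⟨e, he, rfl | rfl⟩
      · exact ⟨Dl e, ⟨e, he, rfl⟩, by simp [hDl]⟩
      · exact ⟨Dl e, ⟨e, he, rfl⟩, by simp [hDl]⟩
  have hmem12 : ∀ p : V × V, p ∈ SL L₁ ↔ p ∈ SL L₂ := by
    intro p
    rw [hmem, hmem]
    exact ⟨fun ⟨e, _, hp⟩ => ⟨e, hall₂ e, hp⟩, fun ⟨e, _, hp⟩ => ⟨e, hall₁ e, hp⟩⟩
  -- Totality of the connectivity relation, from `h`.
  have htot : ∀ x y : V, lrel (SL L₂) x y := by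
    intro x y
    obtain ⟨k, hk⟩ := h x y
    have h1 : lrel (SL L₁) x ((swapProd (SL L₁) ^ k) x) := lrel_pow (SL L₁) k x
    rw [hprod L₁, hk] at h1
    exact lrel_mono (fun p hp => lrel_of_mem ((hmem12 p).1 hp)) h1
  -- Lengths.
  have hLlen : ∀ L : List E, (SL L).length = 2 * L.length := by
    intro L
    induction L with
    | nil => simp [hSL]
    | cons e L ih =>
      have h1 : SL (e :: L) = Dl e ++ SL L := by simp [hSL]
      rw [h1, List.length_append, ih]
      simp [hDl, List.length_cons]
      omega
  have hL2len : L₂.length = n := by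
    have huniv : L₂.toFinset = Finset.univ :=
      Finset.eq_univ_iff_forall.2 fun e => List.mem_toFinset.2 (hall₂ e)
    have := List.toFinset_card_of_nodup hnd₂
    rw [huniv, Finset.card_univ, hE] at this
    omega
  have hSlen : (SL L₂).length = 2 * n := by rw [hLlen, hL2len]
  -- The forest condition.
  have hforest : ∀ A pr B, SL L₂ = A ++ pr :: B → ¬ lrel B pr.1 pr.2 := by
    intro A pr B hSplit hrelB
    have htot' : ∀ x y : V, lrel (A ++ B) x y := by
      intro x y
      refine lrel_mono ?_ (htot x y)
      intro r hr
      rw [hSplit] at hr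
      rcases List.mem_append.1 hr with hrA | hrB
      · exact lrel_of_mem (List.mem_append.2 (Or.inl hrA))
      · rcases List.mem_cons.1 hrB with rfl | hrB
        · exact lrel_mono (fun s hs => lrel_of_mem (List.mem_append.2 (Or.inr hs))) hrelB
        · exact lrel_of_mem (List.mem_append.2 (Or.inr hrB))
    have h1 := card_le_quot (V := V) (A ++ B)
    have h2 := quot_card_le_one htot'
    have h3 : A.length + B.length + 1 = 2 * n := by
      have := congrArg List.length hSplit
      rw [hSlen] at this
      simp [List.length_append, List.length_cons] at this
      omega
    rw [hV, List.length_append] at h1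
    omega
  -- Conclude via Dénes's theorem.
  intro x y
  have hsc : (swapProd (SL L₂)).SameCycle x y := denes (SL L₂) hforest x y (htot x y)
  obtain ⟨i, -, hi⟩ := hsc.exists_pow_eq'
  rw [hprod L₂] at hi
  exact ⟨i, hi⟩
end

section
/- A graph with m vertices and m−1 edges is a tree if and only if the product (in any order) of the m−1 transpositions corresponding to its edges is an m-cycle of the vertex set. -/
/-- The transposition of the two endpoints of an unordered pair. -/
def edgeSwap {V : Type*} [DecidableEq V] : Sym2 V → Equiv.Perm V :=
  Sym2.lift ⟨fun a b => Equiv.swap a b, fun a b => Equiv.swap_comm a b⟩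

open Equiv SimpleGraph

section Aux

variable {V : Type*} [DecidableEq V]

@[simp] lemma edgeSwap_mk (a b : V) : edgeSwap s(a, b) = Equiv.swap a b := rfl

/-- Following a trajectory of `τ` step by step. -/
lemma pow_eq_of_follow {σ τ : Equiv.Perm V} {b : V} {k : ℕ}
    (h : ∀ i < k, σ ((τ ^ i) b) = (τ ^ (i + 1)) b) : (σ ^ k) b = (τ ^ k) b := by
  induction k with
  | zero => simp
  | succ n ih =>
    have h' : ∀ i < n, σ ((τ ^ i) b) = (τ ^ (i + 1)) b := fun i hi => h i (by omega)
    rw [pow_succ', Equiv.Perm.mul_apply, ih h', h n (by omega)]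

lemma sameCycle_swap_mul_left [Finite V] {τ : Equiv.Perm V} {a b : V}
    (hnot : ¬ τ.SameCycle a b) : (Equiv.swap a b * τ).SameCycle a b := by
  have hab : a ≠ b := by rintro rfl; exact hnot (Equiv.Perm.SameCycle.refl _ _)
  have hper : Function.IsPeriodicPt (⇑τ) (orderOf τ) a := by
    show (⇑τ)^[orderOf τ] a = a
    rw [← Equiv.Perm.coe_pow, pow_orderOf_eq_one]; rfl
  set n := Function.minimalPeriod (⇑τ) a with hn
  have hn0 : 0 < n :=
    Function.minimalPeriod_pos_of_mem_periodicPts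
      (Function.mk_mem_periodicPts (orderOf_pos τ) hper)
  have hna : (τ ^ n) a = a := by
    have h := Function.isPeriodicPt_minimalPeriod (⇑τ) a
    show ⇑(τ ^ n) a = a
    rw [Equiv.Perm.coe_pow]
    exact h
  have hne_a : ∀ i, 0 < i → i < n → (τ ^ i) a ≠ a := by
    intro i hi0 hin heq
    have hp : Function.IsPeriodicPt (⇑τ) i a := by
      show (⇑τ)^[i] a = a
      rw [← Equiv.Perm.coe_pow]; exact heq
    have := Nat.le_of_dvd hi0 hp.minimalPeriod_dvd
    omega
  have hne_b : ∀ i : ℕ, (τ ^ i) a ≠ b := fun i h =>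
    hnot ⟨(i : ℤ), by simpa [zpow_natCast] using h⟩
  have follow : ∀ i < n - 1, (Equiv.swap a b * τ) ((τ ^ i) a) = (τ ^ (i + 1)) a := by
    intro i hi
    rw [Equiv.Perm.mul_apply, ← Equiv.Perm.mul_apply τ, ← pow_succ',
      Equiv.swap_apply_of_ne_of_ne (hne_a (i + 1) (by omega) (by omega)) (hne_b (i + 1))]
  have hσpow : ((Equiv.swap a b * τ) ^ (n - 1)) a = (τ ^ (n - 1)) a := pow_eq_of_follow follow
  have final : ((Equiv.swap a b * τ) ^ n) a = b := by
    obtain ⟨m, hm⟩ : ∃ m, n = m + 1 := ⟨n - 1, by omega⟩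
    have hσpow' : ((Equiv.swap a b * τ) ^ m) a = (τ ^ m) a := by
      simpa [hm] using hσpow
    have hτ : τ ((τ ^ m) a) = a := by
      rw [← Equiv.Perm.mul_apply, ← pow_succ', ← hm]; exact hna
    rw [hm, pow_succ', Equiv.Perm.mul_apply, hσpow', Equiv.Perm.mul_apply, hτ,
      Equiv.swap_apply_left]
  exact ⟨(n : ℤ), by simpa [zpow_natCast] using final⟩

lemma sameCycle_swap_mul_apply [Finite V] {τ : Equiv.Perm V} {a b : V}
    (hnot : ¬ τ.SameCycle a b) (z : V) : (Equiv.swap a b * τ).SameCycle z (τ z) := by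
  have hab : (Equiv.swap a b * τ).SameCycle a b := sameCycle_swap_mul_left hnot
  have hz : (Equiv.swap a b * τ).SameCycle z ((Equiv.swap a b * τ) z) :=
    ⟨(1 : ℤ), by simp⟩
  by_cases h1 : τ z = a
  · have hzb : (Equiv.swap a b * τ) z = b := by
      rw [Equiv.Perm.mul_apply, h1, Equiv.swap_apply_left]
    rw [h1]
    exact (hzb ▸ hz).trans hab.symm
  by_cases h2 : τ z = b
  · have hza : (Equiv.swap a b * τ) z = a := by
      rw [Equiv.Perm.mul_apply, h2, Equiv.swap_apply_right]
    rw [h2]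
    exact (hza ▸ hz).trans hab
  · have hzz : (Equiv.swap a b * τ) z = τ z := by
      rw [Equiv.Perm.mul_apply, Equiv.swap_apply_of_ne_of_ne h1 h2]
    exact hzz ▸ hz

lemma sameCycle_swap_mul_of_sameCycle [Finite V] {τ : Equiv.Perm V} {a b x y : V}
    (hnot : ¬ τ.SameCycle a b) (h : τ.SameCycle x y) :
    (Equiv.swap a b * τ).SameCycle x y := by
  obtain ⟨k, -, hk⟩ := h.exists_pow_eq'
  rw [← hk]
  clear hk
  induction k with
  | zero => exact Equiv.Perm.SameCycle.refl _ _
  | succ n ih =>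
    rw [pow_succ', Equiv.Perm.mul_apply]
    exact ih.trans (sameCycle_swap_mul_apply hnot _)

lemma reachable_edgeSwap (H : SimpleGraph V) :
    ∀ e : Sym2 V, e ∈ H.edgeSet → ∀ z : V, H.Reachable z (edgeSwap e z) := by
  intro e
  induction e using Sym2.ind with
  | _ a b =>
    intro he z
    have hadj : H.Adj a b := he
    rw [edgeSwap_mk]
    by_cases hza : z = a
    · subst hza; rw [Equiv.swap_apply_left]; exact hadj.reachable
    by_cases hzb : z = b
    · subst hzb; rw [Equiv.swap_apply_right]; exact hadj.symm.reachable
    · rw [Equiv.swap_apply_of_ne_of_ne hza hzb]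

lemma reachable_prod_apply (H : SimpleGraph V) (L : List (Sym2 V))
    (hL : ∀ e ∈ L, e ∈ H.edgeSet) (x : V) :
    H.Reachable x ((L.map edgeSwap).prod x) := by
  induction L generalizing x with
  | nil => simpa using Reachable.refl x
  | cons e t ih =>
    simp only [List.map_cons, List.prod_cons, Equiv.Perm.mul_apply]
    have h1 : H.Reachable x ((t.map edgeSwap).prod x) :=
      ih (fun e' he' => hL e' (List.mem_cons_of_mem _ he')) x
    exact h1.trans (reachable_edgeSwap H e (hL e List.mem_cons_self) _)

lemma reachable_of_sameCycle [Finite V] (H : SimpleGraph V) (L : List (Sym2 V))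
    (hL : ∀ e ∈ L, e ∈ H.edgeSet) {x y : V}
    (h : ((L.map edgeSwap).prod).SameCycle x y) : H.Reachable x y := by
  obtain ⟨k, -, hk⟩ := h.exists_pow_eq'
  rw [← hk]
  clear hk
  induction k with
  | zero => simpa using Reachable.refl x
  | succ n ih =>
    rw [pow_succ', Equiv.Perm.mul_apply]
    exact ih.trans (reachable_prod_apply H L hL _)

lemma sameCycle_of_reachable [Finite V] {G : SimpleGraph V} (hG : G.IsAcyclic)
    (L : List (Sym2 V)) (hnd : L.Nodup) (hmem : ∀ e ∈ L, e ∈ G.edgeSet) :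
    ∀ x y : V, (SimpleGraph.fromEdgeSet {e | e ∈ L}).Reachable x y →
      ((L.map edgeSwap).prod).SameCycle x y := by
  induction L with
  | nil =>
    intro x y h
    have hset : {e : Sym2 V | e ∈ ([] : List (Sym2 V))} = (∅ : Set (Sym2 V)) := by
      ext e; simp
    rw [hset, fromEdgeSet_empty, reachable_bot] at h
    subst h
    exact Equiv.Perm.SameCycle.refl _ _
  | cons e t ih =>
    induction e using Sym2.ind with
    | _ a b =>
      have hadj : G.Adj a b := hmem _ List.mem_cons_self
      have hab : a ≠ b := hadj.ne
      have hmem_t : ∀ e ∈ t, e ∈ G.edgeSet := fun e he =>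
        hmem e (List.mem_cons_of_mem _ he)
      have hnd_t : t.Nodup := hnd.of_cons
      have hnotmem : s(a, b) ∉ t := (List.nodup_cons.mp hnd).1
      -- the tail graph is a subgraph of G minus the edge s(a,b)
      have hle : SimpleGraph.fromEdgeSet {e | e ∈ t} ≤ G \ fromEdgeSet {s(a, b)} := by
        intro u w huw
        rw [fromEdgeSet_adj] at huw
        rw [sdiff_adj]
        refine ⟨(mem_edgeSet G).mp (hmem_t _ huw.1), ?_⟩
        rw [fromEdgeSet_adj]
        rintro ⟨heq, -⟩
        rw [Set.mem_singleton_iff] at heq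
        exact hnotmem (heq ▸ huw.1)
      have hbridge : ¬ (fromEdgeSet {e | e ∈ t}).Reachable a b := by
        intro h
        exact (isAcyclic_iff_forall_adj_isBridge.mp hG hadj) (h.mono hle)
      set τ := (t.map edgeSwap).prod with hτdef
      have iht : ∀ x y : V, (fromEdgeSet {e | e ∈ t}).Reachable x y → τ.SameCycle x y :=
        ih hnd_t hmem_t
      have hτnot : ¬ τ.SameCycle a b := by
        intro h
        refine hbridge (reachable_of_sameCycle _ t (fun e he => ?_) h)
        rw [edgeSet_fromEdgeSet]
        exact ⟨he, G.not_isDiag_of_mem_edgeSet (hmem_t e he)⟩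
      have hprod : ((s(a, b) :: t).map edgeSwap).prod = Equiv.swap a b * τ := by
        simp [hτdef]
      rw [hprod]
      have key : ∀ u w : V, (fromEdgeSet {e | e ∈ (s(a, b) :: t)}).Adj u w →
          (Equiv.swap a b * τ).SameCycle u w := by
        intro u w huw
        rw [fromEdgeSet_adj] at huw
        obtain ⟨hmem', hne⟩ := huw
        rcases List.mem_cons.mp hmem' with heq | hmem''
        · rcases Sym2.eq_iff.mp heq with ⟨rfl, rfl⟩ | ⟨rfl, rfl⟩
          · exact sameCycle_swap_mul_left hτnot
          · exact (sameCycle_swap_mul_left hτnot).symm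
        · have : (fromEdgeSet {e | e ∈ t}).Adj u w := by
            rw [fromEdgeSet_adj]; exact ⟨hmem'', hne⟩
          exact sameCycle_swap_mul_of_sameCycle hτnot (iht u w this.reachable)
      intro x y hreach
      obtain ⟨p⟩ := hreach
      induction p with
      | nil => exact Equiv.Perm.SameCycle.refl _ _
      | cons h q ihp => exact (key _ _ h).trans ihp

end Aux

section Graph

variable {V : Type*} [Fintype V] [DecidableEq V]

/-- A connected graph on `n` vertices has at least `n - 1` edges. -/
lemma card_le_of_connected {G : SimpleGraph V} [Fintype G.edgeSet]
    (hc : G.Connected) : Fintype.card V ≤ G.edgeFinset.card + 1 := by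
  classical
  obtain ⟨r⟩ := hc.nonempty
  have hpred : ∀ v : V, v ≠ r → ∃ u, G.Adj v u ∧ G.dist u r + 1 = G.dist v r := by
    intro v hv
    obtain ⟨p, hp⟩ := hc.exists_walk_length_eq_dist v r
    cases p with
    | nil => exact absurd rfl hv
    | @cons _ u _ h q =>
      refine ⟨u, h, ?_⟩
      have h1 : G.dist u r ≤ q.length := SimpleGraph.dist_le q
      have h2 : G.dist v r ≤ G.dist v u + G.dist u r := hc.dist_triangle
      have h3 : G.dist v u ≤ 1 := by
        simpa using SimpleGraph.dist_le (SimpleGraph.Walk.cons h SimpleGraph.Walk.nil)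
      have h4 : G.dist v r = q.length + 1 := by
        simpa [SimpleGraph.Walk.length_cons] using hp.symm
      omega
  choose f hf1 hf2 using hpred
  set g : V → Sym2 V := fun v => if h : v ≠ r then s(v, f v h) else s(r, r) with hg
  have hcard : (Finset.univ.erase r).card ≤ G.edgeFinset.card := by
    apply Finset.card_le_card_of_injOn g
    · intro v hv
      have hvr : v ≠ r := (Finset.mem_erase.mp hv).1
      rw [Finset.mem_coe, SimpleGraph.mem_edgeFinset]
      simp only [hg, dif_pos hvr]
      exact (hf1 v hvr)
    · intro v hv w hw hvw
      have hvr : v ≠ r := by simpa using hv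
      have hwr : w ≠ r := by simpa using hw
      simp only [hg, dif_pos hvr, dif_pos hwr] at hvw
      rcases Sym2.eq_iff.mp hvw with ⟨h1, -⟩ | ⟨h1, h2⟩
      · exact h1
      · exfalso
        have d1 := hf2 v hvr
        have d2 := hf2 w hwr
        have dv : 0 < G.dist v r := hc.pos_dist_of_ne hvr
        have dw : 0 < G.dist w r := hc.pos_dist_of_ne hwr
        rw [← h1] at d2
        rw [h2] at d1
        omega
  have herase : (Finset.univ.erase r).card = Fintype.card V - 1 := by
    rw [Finset.card_erase_of_mem (Finset.mem_univ r), Finset.card_univ]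
  have hpos : 0 < Fintype.card V := Fintype.card_pos_iff.mpr ⟨r⟩
  omega

lemma isTree_of_connected_card {G : SimpleGraph V} [Fintype G.edgeSet]
    (hc : G.Connected) (hcard : G.edgeFinset.card + 1 = Fintype.card V) : G.IsTree := by
  classical
  refine ⟨hc, ?_⟩
  rw [isAcyclic_iff_forall_adj_isBridge]
  intro u v huv
  by_contra hbr
  have hre : (G \ fromEdgeSet {s(u, v)}).Reachable u v := by
    by_contra h
    exact hbr (isBridge_iff.mpr h)
  set G' := G \ fromEdgeSet {s(u, v)} with hG'
  have hstep : ∀ {c d : V}, G.Adj c d → G'.Reachable c d := by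
    intro c d hcd
    by_cases heq : s(c, d) = s(u, v)
    · rcases Sym2.eq_iff.mp heq with ⟨rfl, rfl⟩ | ⟨rfl, rfl⟩
      · exact hre
      · exact hre.symm
    · apply SimpleGraph.Adj.reachable
      rw [hG', sdiff_adj]
      refine ⟨hcd, ?_⟩
      rw [fromEdgeSet_adj]
      rintro ⟨h1, -⟩
      exact heq h1
  have hconn' : G'.Connected := by
    rw [connected_iff]
    refine ⟨?_, hc.nonempty⟩
    intro x y
    obtain ⟨p⟩ := hc.preconnected x y
    induction p with
    | nil => exact Reachable.refl _
    | cons h q ihp => exact (hstep h).trans ihp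
  have hssub : G'.edgeFinset ⊂ G.edgeFinset := by
    constructor
    · exact SimpleGraph.edgeFinset_mono sdiff_le
    · intro hsup
      have h1 : s(u, v) ∈ G.edgeFinset := by
        rw [SimpleGraph.mem_edgeFinset]; exact huv
      have h2 := hsup h1
      rw [SimpleGraph.mem_edgeFinset, SimpleGraph.mem_edgeSet, hG', sdiff_adj,
        fromEdgeSet_adj] at h2
      exact h2.2 ⟨rfl, huv.ne⟩
  have hlt := Finset.card_lt_card hssub
  have hle := card_le_of_connected hconn'
  omega

end Graph

/-- A graph with `m ≥ 1` vertices and `m − 1` edges is a tree if and only if the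
product (in any order, here given by a list `L` enumerating the edges) of the `m − 1`
transpositions corresponding to its edges is an `m`-cycle of the vertex set. -/
theorem graph_isTree_iff_prod_transpositions_isFullCycle {V : Type*} [Fintype V] [DecidableEq V]
    (G : SimpleGraph V) [DecidableRel G.Adj] (m : ℕ) (hm : 1 ≤ m)
    (hV : Fintype.card V = m) (hE : G.edgeFinset.card = m - 1)
    (L : List (Sym2 V)) (hnd : L.Nodup) (hall : ∀ e, e ∈ L ↔ e ∈ G.edgeFinset) :
    G.IsTree ↔ IsFullCycle (L.map edgeSwap).prod := by
  classical
  have hLedge : ∀ e ∈ L, e ∈ G.edgeSet := fun e he => by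
    rw [← SimpleGraph.mem_edgeFinset]
    exact (hall e).mp he
  have hset : {e : Sym2 V | e ∈ L} = G.edgeSet := by
    ext e
    simp only [Set.mem_setOf_eq, hall e, SimpleGraph.mem_edgeFinset]
  constructor
  · intro hT x y
    have hr : (fromEdgeSet {e | e ∈ L}).Reachable x y := by
      rw [hset, fromEdgeSet_edgeSet]
      exact hT.isConnected.preconnected x y
    obtain ⟨k, -, hk⟩ :=
      (sameCycle_of_reachable hT.IsAcyclic L hnd hLedge x y hr).exists_pow_eq'
    exact ⟨k, hk⟩
  · intro hfc
    have hconn : G.Connected := by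
      rw [connected_iff]
      constructor
      · intro x y
        obtain ⟨k, hk⟩ := hfc x y
        exact reachable_of_sameCycle G L hLedge ⟨(k : ℤ), by simpa [zpow_natCast] using hk⟩
      · have : 0 < Fintype.card V := by omega
        exact Fintype.card_pos_iff.mp this
    exact isTree_of_connected_card hconn (by omega)
end

section
/- Let T be a tree 3-graph with a chosen orientation (3-cycle) on each edge, and fix an ordering of the edges; the product of the edge 3-cycles is a cyclic permutation of V(T) and hence determines an orientation (ordering up to even permutation) of V(T). This orientation does not depend on the chosen ordering of the edges. -/
open Equiv Equiv.Perm Finset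

theorem Equiv.Perm.apply_inv_self {α : Type*} (f : Equiv.Perm α) (x : α) : f (f⁻¹ x) = x :=
  Equiv.apply_symm_apply f x

theorem Equiv.Perm.inv_apply_self {α : Type*} (f : Equiv.Perm α) (x : α) : f⁻¹ (f x) = x :=
  Equiv.symm_apply_apply f x


section TS
variable {V : Type*} [DecidableEq V] [Fintype V]


lemma glue_cycle {f g : Equiv.Perm V} {v : V} (hf : f.IsCycle) (hg : g.IsCycle)
    (hfg : f.support ∩ g.support = {v}) :
    (f * g).IsCycle ∧ (f * g).support = f.support ∪ g.support := by
  have hvf : v ∈ f.support := by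
    have : v ∈ f.support ∩ g.support := hfg ▸ mem_singleton_self v
    exact (mem_inter.mp this).1
  have hvg : v ∈ g.support := by
    have : v ∈ f.support ∩ g.support := hfg ▸ mem_singleton_self v
    exact (mem_inter.mp this).2
  have honly : ∀ x, x ∈ f.support → x ∈ g.support → x = v := by
    intro x h1 h2
    have : x ∈ f.support ∩ g.support := mem_inter.mpr ⟨h1, h2⟩
    simpa [hfg] using this
  -- the product fixes nothing on the union
  have hmove : ∀ x, x ∈ f.support ∪ g.support → (f * g) x ≠ x := by
    intro x hx
    rcases mem_union.mp hx with hxA | hxB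
    · by_cases hxB : x ∈ g.support
      · by_cases hgv : g x ∈ f.support
        · have h1 : g x = v := honly _ hgv (apply_mem_support.mpr hxB)
          have h2 : x = v := honly x hxA hxB
          exact absurd (h1.trans h2.symm) (mem_support.mp hxB)
        · simp only [Perm.mul_apply, notMem_support.mp hgv]
          exact mem_support.mp hxB
      · have : g x = x := notMem_support.mp hxB
        simp only [Perm.mul_apply, this]
        exact mem_support.mp hxA
    · by_cases hgv : g x = v
      · have hx_ne_v : x ≠ v := by
          intro h; subst h; exact (mem_support.mp hxB) hgv
        simp only [Perm.mul_apply, hgv]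
        intro hfv
        have : v ∈ f.support := hvf
        have hfvA : f v ∈ f.support := apply_mem_support.mpr hvf
        rw [hfv] at hfvA
        exact hx_ne_v (honly x hfvA hxB)
      · have hgxB : g x ∈ g.support := apply_mem_support.mpr hxB
        have hgxA : g x ∉ f.support := fun h => hgv (honly _ h hgxB)
        simp only [Perm.mul_apply, notMem_support.mp hgxA]
        exact mem_support.mp hxB
  have hsupp : (f * g).support = f.support ∪ g.support := by
    apply subset_antisymm (support_mul_le f g)
    intro x hx
    exact mem_support.mpr (hmove x hx)
  -- same-cycle claims
  have hB : ∀ k : ℕ, (f * g).SameCycle v ((g ^ k) v) := by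
    intro k
    induction k with
    | zero => exact Equiv.Perm.SameCycle.refl _ _
    | succ k ih =>
      by_cases hvv : (g ^ (k+1)) v = v
      · rw [hvv]
      · have hmem : (g ^ (k+1)) v ∈ g.support := pow_apply_mem_support.mpr hvg
        have hA : (g ^ (k+1)) v ∉ f.support := fun h => hvv (honly _ h hmem)
        have hstep : (f * g) ((g ^ k) v) = (g ^ (k+1)) v := by
          have h3 : g ((g ^ k) v) = (g ^ (k+1)) v := by
            rw [pow_succ', Perm.mul_apply]
          simp only [Perm.mul_apply, h3, notMem_support.mp hA]
        have := Perm.sameCycle_apply_right.mpr ih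
        rwa [hstep] at this
  have hBx : ∀ x ∈ g.support, (f * g).SameCycle v x := by
    intro x hx
    obtain ⟨k, hk⟩ := hg.exists_pow_eq (mem_support.mp hvg) (mem_support.mp hx)
    exact hk ▸ hB k
  have hA : ∀ k : ℕ, (f * g).SameCycle v ((f ^ k) v) := by
    intro k
    induction k with
    | zero => exact Equiv.Perm.SameCycle.refl _ _
    | succ k ih =>
      by_cases hxB : (f ^ k) v ∈ g.support
      · have hxA : (f ^ k) v ∈ f.support := pow_apply_mem_support.mpr hvf
        have hxv : (f ^ k) v = v := honly _ hxA hxB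
        have hginv : g⁻¹ v ∈ g.support := by
          rw [← support_inv]; exact apply_mem_support.mpr (by rwa [support_inv])
        have hstep : (f * g) (g⁻¹ v) = (f ^ (k+1)) v := by
          simp only [Perm.mul_apply, Equiv.Perm.apply_inv_self]
          rw [pow_succ', Perm.mul_apply, hxv]
        have := Perm.sameCycle_apply_right.mpr (hBx _ hginv)
        rwa [hstep] at this
      · have hstep : (f * g) ((f ^ k) v) = (f ^ (k+1)) v := by
          simp only [Perm.mul_apply, notMem_support.mp hxB]
          rw [pow_succ', Perm.mul_apply]
        have := Perm.sameCycle_apply_right.mpr ih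
        rwa [hstep] at this
  have hAx : ∀ x ∈ f.support, (f * g).SameCycle v x := by
    intro x hx
    obtain ⟨k, hk⟩ := hf.exists_pow_eq (mem_support.mp hvf) (mem_support.mp hx)
    exact hk ▸ hA k
  refine ⟨⟨v, hmove v (mem_union_left _ hvf), ?_⟩, hsupp⟩
  intro y hy
  have : y ∈ f.support ∪ g.support := hsupp ▸ mem_support.mpr hy
  rcases mem_union.mp this with h | h
  · exact hAx y h
  · exact hBx y h

def psupp (l : List (Equiv.Perm V)) : Finset V :=
  l.foldr (fun p s => p.support ∪ s) ∅

@[simp] lemma psupp_nil : psupp ([] : List (Equiv.Perm V)) = ∅ := rfl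

@[simp] lemma psupp_cons (p : Equiv.Perm V) (l : List (Equiv.Perm V)) :
    psupp (p :: l) = p.support ∪ psupp l := rfl

lemma psupp_append (a b : List (Equiv.Perm V)) :
    psupp (a ++ b) = psupp a ∪ psupp b := by
  induction a with
  | nil => simp
  | cons p a ih => simp [ih, union_assoc]

lemma psupp_perm {a b : List (Equiv.Perm V)} (h : a.Perm b) : psupp a = psupp b := by
  induction h with
  | nil => rfl
  | cons x _ ih => simp [ih]
  | swap x y l => simp [← union_assoc, union_comm (Equiv.Perm.support x) (Equiv.Perm.support y)]
  | trans _ _ ih1 ih2 => rw [ih1, ih2]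

lemma supp_prod_le (l : List (Equiv.Perm V)) : l.prod.support ⊆ psupp l := by
  induction l with
  | nil => simp
  | cons p l ih =>
    rw [List.prod_cons, psupp_cons]
    exact subset_trans (support_mul_le p l.prod) (union_subset_union (subset_refl _) ih)

lemma sign_prod_one {l : List (Equiv.Perm V)} (h : ∀ p ∈ l, p.IsThreeCycle) :
    Equiv.Perm.sign l.prod = 1 := by
  rw [map_list_prod]
  apply List.prod_eq_one
  intro x hx
  obtain ⟨p, hp, rfl⟩ := List.mem_map.mp hx
  exact (h p hp).sign

inductive TreeSeq : List (Equiv.Perm V) → Prop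
  | single (g : Equiv.Perm V) (h3 : g.IsThreeCycle) : TreeSeq [g]
  | snoc (l : List (Equiv.Perm V)) (g : Equiv.Perm V) (h : TreeSeq l) (h3 : g.IsThreeCycle)
      (hint : (psupp l ∩ g.support).card = 1) : TreeSeq (l ++ [g])

lemma TreeSeq.three_cycles {l : List (Equiv.Perm V)} (h : TreeSeq l) :
    ∀ p ∈ l, p.IsThreeCycle := by
  induction h with
  | single g h3 => intro p hp; rw [List.mem_singleton] at hp; rwa [hp]
  | snoc l g _ h3 hint ih =>
    intro p hp
    rcases List.mem_append.mp hp with h | h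
    · exact ih p h
    · rw [List.mem_singleton] at h; rwa [h]



theorem master {l : List (Equiv.Perm V)} (h : TreeSeq l) :
    l.prod.IsCycle ∧ l.prod.support = psupp l ∧
      ∀ l' : List (Equiv.Perm V), l'.Perm l → ∃ s : Equiv.Perm V, Equiv.Perm.sign s = 1 ∧
        s.support ⊆ psupp l ∧ l'.prod = s * l.prod * s⁻¹ := by
  induction h with
  | single g h3 =>
    refine ⟨h3.isCycle, by simp, ?_⟩
    intro l' hl'
    rw [List.perm_singleton.mp hl']
    exact ⟨1, by simp, by simp, by simp⟩
  | snoc N g hN h3 hint ih =>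
    obtain ⟨hQc, hQs, hIH⟩ := ih
    set Q := N.prod with hQ
    have hprodl : (N ++ [g]).prod = Q * g := by rw [List.prod_append, List.prod_cons, List.prod_nil, mul_one]
    have hintQ : Q.support ∩ g.support = psupp N ∩ g.support := by rw [hQs]
    obtain ⟨v, hv⟩ := card_eq_one.mp (by rw [← hQs] at hint; exact hint)
    have hvQ : v ∈ Q.support := by
      have : v ∈ Q.support ∩ g.support := hv ▸ mem_singleton_self v
      exact (mem_inter.mp this).1
    have hvg : v ∈ g.support := by
      have : v ∈ Q.support ∩ g.support := hv ▸ mem_singleton_self v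
      exact (mem_inter.mp this).2
    have honly : ∀ x, x ∈ psupp N → x ∈ g.support → x = v := by
      intro x h1 h2
      have : x ∈ Q.support ∩ g.support := mem_inter.mpr ⟨hQs ▸ h1, h2⟩
      simpa [hv] using this
    -- glue
    have hglue := glue_cycle hQc h3.isCycle hv
    have hsupp_l : (N ++ [g]).prod.support = psupp (N ++ [g]) := by
      rw [hprodl, hglue.2, hQs, psupp_append]
      simp
    refine ⟨hprodl ▸ hglue.1, hsupp_l, ?_⟩
    intro l' hperm
    have hgl' : g ∈ l' := hperm.mem_iff.mpr (by simp)
    obtain ⟨A, B, rfl⟩ := List.append_of_mem hgl'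
    have hBA : (B ++ A).Perm N := by
      have h1 : (A ++ g :: B).Perm (g :: (A ++ B)) := List.perm_middle
      have h2 : (N ++ [g]).Perm (g :: N) := List.perm_append_singleton g N
      have h3' : (g :: (A ++ B)).Perm (g :: N) := (h1.symm.trans hperm).trans h2
      exact (List.perm_append_comm).trans h3'.cons_inv
    obtain ⟨t, hts, htsupp, htQ⟩ := hIH (B ++ A) hBA
    have htinv : t⁻¹ v ∈ Q.support := by
      by_cases h : t⁻¹ v = v
      · rwa [h]
      · have : t⁻¹ v ∈ t.support := mem_support.mpr (by rw [Equiv.Perm.apply_inv_self]; exact fun hh => h hh.symm)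
        rw [hQs]; exact htsupp this
    obtain ⟨k, hk⟩ := hQc.exists_pow_eq (mem_support.mp hvQ) (mem_support.mp htinv)
    set s' := t * Q ^ k with hs'
    have hQk_supp : (Q ^ k).support ⊆ psupp N := by
      rw [← hQs]; exact support_pow_le Q k
    have hs'supp : s'.support ⊆ psupp N :=
      subset_trans (support_mul_le t (Q ^ k)) (union_subset htsupp hQk_supp)
    have hs'v : s' v = v := by
      rw [hs', Perm.mul_apply, hk, Equiv.Perm.apply_inv_self]
    have hs'inv_v : s'⁻¹ v = v := by
      conv_lhs => rw [← hs'v]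
      exact Equiv.Perm.inv_apply_self s' v
    have hcomm : s' * g = g * s' := by
      ext x
      simp only [Perm.mul_apply]
      by_cases hxg : x ∈ g.support
      · have hgx : g x ∈ g.support := apply_mem_support.mpr hxg
        have h1 : s' (g x) = g x := by
          by_cases hgxv : g x = v
          · rw [hgxv, hs'v]
          · have : g x ∉ psupp N := fun hh => hgxv (honly _ hh hgx)
            exact notMem_support.mp (fun hh => this (hs'supp hh))
        have h2 : s' x = x := by
          by_cases hxv : x = v
          · rw [hxv, hs'v]
          · have : x ∉ psupp N := fun hh => hxv (honly _ hh hxg)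
            exact notMem_support.mp (fun hh => this (hs'supp hh))
        rw [h1, h2]
      · have hgxx : g x = x := notMem_support.mp hxg
        have hsx : s' x ∉ g.support := by
          intro hh
          by_cases hfix : s' x = x
          · rw [hfix] at hh; exact hxg hh
          · have hmem : s' x ∈ psupp N := hs'supp (apply_mem_support.mpr (mem_support.mpr hfix))
            have : s' x = v := honly _ hmem hh
            have : x = v := by
              have := congrArg (s'⁻¹ ·) this
              simpa [hs'inv_v] using this
            rw [this] at hxg; exact hxg hvg
        rw [hgxx, notMem_support.mp hsx]
    -- signs
    have hsignQ : Equiv.Perm.sign Q = 1 := sign_prod_one hN.three_cycles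
    have htc' : ∀ p ∈ A ++ g :: B, p.IsThreeCycle := by
      intro p hp
      exact (TreeSeq.snoc N g hN h3 hint).three_cycles p (hperm.mem_iff.mp hp)
    have hsignc : Equiv.Perm.sign A.prod = 1 :=
      sign_prod_one (fun p hp => htc' p (by simp [hp]))
    have hsigns' : Equiv.Perm.sign s' = 1 := by
      rw [hs', map_mul, hts, map_pow, hsignQ, one_pow, one_mul]
    set c := A.prod with hc
    have hsQ : s' * Q * s'⁻¹ = t * Q * t⁻¹ := by
      rw [hs', mul_inv_rev]
      group
    refine ⟨c * s' * g, ?_, ?_, ?_⟩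
    · rw [map_mul, map_mul, hsignc, hsigns', h3.sign]; norm_num
    · refine subset_trans (support_mul_le _ _) (union_subset (subset_trans (support_mul_le _ _) (union_subset ?_ ?_)) ?_)
      · rw [← psupp_perm hperm]
        calc c.support ⊆ psupp A := supp_prod_le A
          _ ⊆ psupp (A ++ g :: B) := by rw [psupp_append]; exact subset_union_left
      · exact subset_trans hs'supp (by rw [psupp_append]; exact subset_union_left)
      · rw [psupp_append]; exact subset_trans (by simp) subset_union_right
    · calc (A ++ g :: B).prod = c * (g * B.prod) := by rw [List.prod_append, List.prod_cons]
        _ = c * g * B.prod := by rw [mul_assoc]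
        _ = c * g * ((B ++ A).prod * c⁻¹) := by rw [List.prod_append, ← hc]; group
        _ = c * g * (t * Q * t⁻¹) * c⁻¹ := by rw [htQ]; group
        _ = c * g * (s' * Q * s'⁻¹) * c⁻¹ := by rw [hsQ]
        _ = c * (g * s') * Q * s'⁻¹ * c⁻¹ := by group
        _ = c * (s' * g) * Q * s'⁻¹ * c⁻¹ := by rw [hcomm]
        _ = (c * s' * g) * (N ++ [g]).prod * (c * s' * g)⁻¹ := by rw [hprodl]; group


lemma conj_fullCycle {P s : Equiv.Perm V} (hc : P.IsCycle) (hs : P.support = Finset.univ) :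
    ∀ x y : V, ∃ k : ℕ, ((s * P * s⁻¹) ^ k) x = y := by
  intro x y
  have h1 : s⁻¹ x ∈ P.support := by rw [hs]; exact mem_univ _
  have h2 : s⁻¹ y ∈ P.support := by rw [hs]; exact mem_univ _
  obtain ⟨k, hk⟩ := hc.exists_pow_eq (mem_support.mp h1) (mem_support.mp h2)
  refine ⟨k, ?_⟩
  rw [conj_pow]
  simp only [Perm.mul_apply, hk, Equiv.Perm.apply_inv_self]
end TS

section Graph
set_option linter.unusedSectionVars false
variable {V E : Type*} [DecidableEq V] [Fintype V] [Fintype E]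

variable (G : ThreeGraph V E) (σ : E → Equiv.Perm V)

def InRegion (L : List E) : V ⊕ E → Prop
  | Sum.inl w => w ∈ psupp (L.map σ)
  | Sum.inr e => e ∈ L

lemma mem_psupp_of_mem {e : E} {L : List E} (h : e ∈ L) :
    (σ e).support ⊆ psupp (L.map σ) := by
  induction L with
  | nil => simp at h
  | cons a L ih =>
    rcases List.mem_cons.mp h with rfl | h
    · simp only [List.map_cons, psupp_cons]; exact subset_union_left
    · exact subset_trans (ih h) (by simp only [List.map_cons, psupp_cons]; exact subset_union_right)

lemma psupp_append' (a b : List (Equiv.Perm V)) :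
    psupp (a ++ b) = psupp a ∪ psupp b := by
  induction a with
  | nil => simp
  | cons p a ih => simp [ih, union_assoc]

lemma inRegion_mono {L : List E} {f : E} {x : V ⊕ E} (h : InRegion σ L x) :
    InRegion σ (L ++ [f]) x := by
  cases x with
  | inl w =>
    simp only [InRegion, List.map_append, psupp_append'] at h ⊢
    exact mem_union_left _ h
  | inr e =>
    simp only [InRegion] at h ⊢
    exact List.mem_append_left _ h

lemma adj_vl {w : V} {e : E} (h : w ∈ G.verts e) :
    G.incidence.Adj (Sum.inl w) (Sum.inr e) := Or.inl ⟨w, e, rfl, rfl, h⟩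

lemma adj_ev {w : V} {e : E} (h : w ∈ G.verts e) :
    G.incidence.Adj (Sum.inr e) (Sum.inl w) := Or.inr ⟨w, e, rfl, rfl, h⟩

def RC (e₀ : E) (L : List E) : Prop :=
  ∀ x, InRegion σ L x →
    ∃ p : G.incidence.Walk (Sum.inr e₀) x, ∀ z ∈ p.support, InRegion σ L z

lemma intersect_one (htree : G.incidence.IsTree)
    (hσ : ∀ e, (σ e).IsThreeCycle ∧ (σ e).support = G.verts e)
    {L : List E} {e₀ : E} (he₀ : e₀ ∈ L) (hrc : RC G σ e₀ L)
    {e : E} (hfe : e ∉ L) {w : V} (hwreg : w ∈ psupp (L.map σ)) (hw : w ∈ G.verts e) :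
    (psupp (L.map σ) ∩ (σ e).support).card = 1 := by
  classical
  rw [(hσ e).2, Finset.card_eq_one]
  refine ⟨w, Finset.eq_singleton_iff_unique_mem.mpr ⟨mem_inter.mpr ⟨hwreg, hw⟩, ?_⟩⟩
  intro w₂ hw₂
  by_contra hne
  obtain ⟨hw₂U, hw₂e⟩ := mem_inter.mp hw₂
  have a₁ : G.incidence.Adj (Sum.inl w₂) (Sum.inr e) := adj_vl G hw₂e
  have a₂ : G.incidence.Adj (Sum.inr e) (Sum.inl w) := adj_ev G hw
  let p₁ : G.incidence.Walk (Sum.inl w₂) (Sum.inl w) :=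
    SimpleGraph.Walk.cons a₁ (SimpleGraph.Walk.cons a₂ SimpleGraph.Walk.nil)
  have hp₁ : p₁.IsPath := by
    simp only [p₁, SimpleGraph.Walk.isPath_def, SimpleGraph.Walk.support_cons,
      SimpleGraph.Walk.support_nil]
    simp [List.nodup_cons, hne]
  obtain ⟨q₁, hq₁⟩ := hrc (Sum.inl w₂) hw₂U
  obtain ⟨q₂, hq₂⟩ := hrc (Sum.inl w) hwreg
  let q := q₁.reverse.append q₂
  have hqsup : ∀ z ∈ q.support, InRegion σ L z := by
    intro z hz
    rw [SimpleGraph.Walk.mem_support_append_iff] at hz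
    rcases hz with hz | hz
    · rw [SimpleGraph.Walk.support_reverse, List.mem_reverse] at hz
      exact hq₁ z hz
    · exact hq₂ z hz
  have hequ := htree.IsAcyclic.path_unique ⟨p₁, hp₁⟩ q.toPath
  have hfmem : Sum.inr e ∈ p₁.support := by simp [p₁]
  have hval : p₁ = q.toPath.val := congrArg Subtype.val hequ
  rw [hval] at hfmem
  have : InRegion σ L (Sum.inr e) := hqsup _ (SimpleGraph.Walk.support_toPath_subset q hfmem)
  exact hfe this


lemma grow (htree : G.incidence.IsTree)
    (hσ : ∀ e, (σ e).IsThreeCycle ∧ (σ e).support = G.verts e) (e₀ : E) :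
    ∀ k : ℕ, ∀ L : List E, L.Nodup → e₀ ∈ L → TreeSeq (L.map σ) → RC G σ e₀ L →
      L.length + k = Fintype.card E →
      ∃ M : List E, M.Nodup ∧ (∀ e, e ∈ M) ∧ TreeSeq (M.map σ) := by
  classical
  intro k
  induction k with
  | zero =>
    intro L hnd _ hts _ hlen
    refine ⟨L, hnd, fun e => ?_, hts⟩
    have h1 : L.toFinset = Finset.univ :=
      Finset.eq_univ_of_card _ (by rw [List.toFinset_card_of_nodup hnd]; omega)
    rw [← List.mem_toFinset, h1]; exact mem_univ e
  | succ k ih =>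
    intro L hnd he₀ hts hrc hlen
    have hex : ∃ f, f ∉ L := by
      by_contra h
      push_neg at h
      have h1 : L.toFinset = Finset.univ :=
        Finset.eq_univ_iff_forall.mpr (fun e => List.mem_toFinset.mpr (h e))
      have h2 := congrArg Finset.card h1
      rw [List.toFinset_card_of_nodup hnd, Finset.card_univ] at h2
      omega
    obtain ⟨f, hf⟩ := hex
    obtain ⟨p⟩ := htree.isConnected (Sum.inr e₀) (Sum.inr f)
    obtain ⟨d, _, hdS, hdnS⟩ := p.exists_boundary_dart {x | InRegion σ L x}
      (show InRegion σ L (Sum.inr e₀) from he₀)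
      (show ¬ InRegion σ L (Sum.inr f) from hf)
    rcases d.adj with ⟨w, e, h1, h2, hw⟩ | ⟨w, e, h1, h2, hw⟩
    · rw [h1] at hdS
      rw [h2] at hdnS
      have hwreg : w ∈ psupp (L.map σ) := hdS
      have hfe : e ∉ L := hdnS
      have hcard := intersect_one G σ htree hσ he₀ hrc hfe hwreg hw
      have hts' : TreeSeq ((L ++ [e]).map σ) := by
        rw [List.map_append]
        refine TreeSeq.snoc _ _ hts (hσ e).1 (by simpa using hcard)
      have hrc' : RC G σ e₀ (L ++ [e]) := by
        obtain ⟨qw, hqw⟩ := hrc (Sum.inl w) hwreg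
        have hqe : ∀ z ∈ (qw.concat (adj_vl G hw)).support, InRegion σ (L ++ [e]) z := by
          intro z hz
          rw [SimpleGraph.Walk.support_concat, List.mem_append] at hz
          rcases hz with hz | hz
          · exact inRegion_mono σ (hqw z hz)
          · rw [List.mem_singleton] at hz
            subst hz
            show e ∈ L ++ [e]
            simp
        intro x hx
        cases x with
        | inr e' =>
          have he' : e' ∈ L ++ [e] := hx
          rcases List.mem_append.mp he' with h | h
          · obtain ⟨p', hp'⟩ := hrc (Sum.inr e') h
            exact ⟨p', fun z hz => inRegion_mono σ (hp' z hz)⟩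
          · rw [List.mem_singleton] at h
            subst h
            exact ⟨qw.concat (adj_vl G hw), hqe⟩
        | inl w' =>
          have hw' : w' ∈ psupp ((L ++ [e]).map σ) := hx
          rw [List.map_append, psupp_append'] at hw'
          rcases mem_union.mp hw' with h | h
          · obtain ⟨p', hp'⟩ := hrc (Sum.inl w') h
            exact ⟨p', fun z hz => inRegion_mono σ (hp' z hz)⟩
          · have hw'e : w' ∈ G.verts e := by
              rw [← (hσ e).2]
              simpa using h
            refine ⟨(qw.concat (adj_vl G hw)).concat (adj_ev G hw'e), ?_⟩
            intro z hz
            rw [SimpleGraph.Walk.support_concat, List.mem_append] at hz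
            rcases hz with hz | hz
            · exact hqe z hz
            · rw [List.mem_singleton] at hz
              subst hz
              exact hx
      refine ih (L ++ [e]) ?_ (List.mem_append_left _ he₀) hts' hrc' ?_
      · rw [List.nodup_append]
        exact ⟨hnd, List.nodup_singleton e, fun a ha b hb hab => hfe (by rw [List.mem_singleton] at hb; subst hb; subst hab; exact ha)⟩
      · simp only [List.length_append, List.length_singleton]
        omega
    · rw [h1] at hdS
      rw [h2] at hdnS
      have heL : e ∈ L := hdS
      have hw' : w ∈ (σ e).support := by rw [(hσ e).2]; exact hw
      exact absurd (mem_psupp_of_mem σ heL hw') hdnS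

lemma coverage (htree : G.incidence.IsTree)
    (hσ : ∀ e, (σ e).IsThreeCycle ∧ (σ e).support = G.verts e)
    [Nonempty E] {M : List E} (hall : ∀ e, e ∈ M) :
    psupp (M.map σ) = Finset.univ := by
  apply Finset.eq_univ_iff_forall.mpr
  intro v
  obtain ⟨e⟩ := ‹Nonempty E›
  obtain ⟨p⟩ := htree.isConnected (Sum.inl v) (Sum.inr e)
  cases p with
  | cons h q =>
    rcases h with ⟨w', e', h1, h2, hw⟩ | ⟨w', e', h1, h2, hw⟩
    · have hv : v = w' := Sum.inl.inj h1
      have : v ∈ (σ e').support := by rw [(hσ e').2, hv]; exact hw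
      exact mem_psupp_of_mem σ (hall e') this
    · exact absurd h1 (by simp)
end Graph

/-- Let `T` be a tree `3`-graph with a chosen `3`-cycle orientation `σ e` on each
edge, and fix an ordering of the edges. The product of the edge `3`-cycles is a cyclic
permutation of `V`, and the orientation of `V` it determines (its conjugacy class under the
alternating group) does not depend on the chosen ordering of the edges. -/
theorem threeGraph_orientation_well_defined {V E : Type*} [DecidableEq V] [Fintype V]
    [Fintype E] (G : ThreeGraph V E)
    (htree : G.incidence.IsTree)
    (σ : E → Equiv.Perm V)
    (hσ : ∀ e, (σ e).IsThreeCycle ∧ (σ e).support = G.verts e)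
    (L₁ L₂ : List E) (hnd₁ : L₁.Nodup) (hall₁ : ∀ e, e ∈ L₁)
    (hnd₂ : L₂.Nodup) (hall₂ : ∀ e, e ∈ L₂) :
    IsFullCycle (L₁.map σ).prod ∧
      ∃ s : Equiv.Perm V, s ∈ alternatingGroup V ∧
        (L₂.map σ).prod = s * (L₁.map σ).prod * s⁻¹ := by
  classical
  rcases isEmpty_or_nonempty E with hE | hE
  · have hL1 : L₁ = [] := by
      cases L₁ with
      | nil => rfl
      | cons a _ => exact isEmptyElim a
    have hL2 : L₂ = [] := by
      cases L₂ with
      | nil => rfl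
      | cons a _ => exact isEmptyElim a
    subst hL1; subst hL2
    simp only [List.map_nil, List.prod_nil]
    constructor
    · intro x y
      have hxy : x = y := by
        obtain ⟨p⟩ := htree.isConnected (Sum.inl x) (Sum.inl y)
        cases p with
        | nil => rfl
        | cons h q =>
          rcases h with ⟨w, e, _, _, _⟩ | ⟨w, e, _, _, _⟩ <;> exact isEmptyElim e
      exact ⟨0, by simp [hxy]⟩
    · exact ⟨1, one_mem _, by simp⟩
  · obtain ⟨e₀⟩ := hE
    haveI : Nonempty E := ⟨e₀⟩
    have seedTS : TreeSeq ([e₀].map σ) := by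
      rw [List.map_singleton]
      exact TreeSeq.single (σ e₀) (hσ e₀).1
    have seedRC : RC G σ e₀ [e₀] := by
      intro x hx
      cases x with
      | inr e' =>
        have he' : e' ∈ [e₀] := hx
        rw [List.mem_singleton] at he'
        subst he'
        refine ⟨SimpleGraph.Walk.nil, ?_⟩
        intro z hz
        simp only [SimpleGraph.Walk.support_nil, List.mem_singleton] at hz
        subst hz
        show e' ∈ [e']
        simp
      | inl w =>
        have hw : w ∈ psupp ([e₀].map σ) := hx
        have hw' : w ∈ G.verts e₀ := by
          rw [← (hσ e₀).2]
          simpa using hw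
        refine ⟨SimpleGraph.Walk.cons (adj_ev G hw') SimpleGraph.Walk.nil, ?_⟩
        intro z hz
        simp only [SimpleGraph.Walk.support_cons, SimpleGraph.Walk.support_nil,
          List.mem_cons, List.mem_singleton] at hz
        rcases hz with hz | hz
        · subst hz
          show e₀ ∈ [e₀]
          simp
        · rcases hz with hz | hz
          · subst hz
            exact hx
          · simp at hz
    obtain ⟨M, hMnd, hMall, hMts⟩ := grow G σ htree hσ e₀ (Fintype.card E - 1) [e₀]
      (List.nodup_singleton _) (List.mem_singleton_self _) seedTS seedRC
      (by
        have h1 : 1 ≤ Fintype.card E := Fintype.card_pos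
        simp only [List.length_singleton]
        omega)
    obtain ⟨hPc, hPs, hPperm⟩ := master hMts
    have hcover : psupp (M.map σ) = Finset.univ := coverage G σ htree hσ hMall
    have hp1 : L₁.Perm M :=
      (List.perm_ext_iff_of_nodup hnd₁ hMnd).mpr (fun a => ⟨fun _ => hMall a, fun _ => hall₁ a⟩)
    have hp2 : L₂.Perm M :=
      (List.perm_ext_iff_of_nodup hnd₂ hMnd).mpr (fun a => ⟨fun _ => hMall a, fun _ => hall₂ a⟩)
    obtain ⟨s₁, hs₁sign, _, hs₁⟩ := hPperm (L₁.map σ) (hp1.map σ)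
    obtain ⟨s₂, hs₂sign, _, hs₂⟩ := hPperm (L₂.map σ) (hp2.map σ)
    constructor
    · rw [hs₁]
      exact conj_fullCycle hPc (by rw [hPs, hcover])
    · refine ⟨s₂ * s₁⁻¹, ?_, ?_⟩
      · rw [Equiv.Perm.mem_alternatingGroup, map_mul, map_inv, hs₁sign, hs₂sign]
        norm_num
      · rw [hs₂, hs₁]
        group
end

section
/- If a monomial ∏_α y_{i_α j_α k_α} occurs with nonzero coefficient in P_m², then there exists p ∈ {1,...,m} occurring exactly twice in the list of all 3(m−1)/2 indices i₁,j₁,k₁,...,i_{(m−1)},j_{(m−1)},k_{(m−1)} of the monomial (of degree m−1). -/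
/-- The `i`-th "low" index `2*i` in `Fin (2*n)`. -/
def pfLo {n : ℕ} (i : Fin n) : Fin (2 * n) := ⟨2 * i.val, by have := i.isLt; omega⟩

/-- The `i`-th "high" index `2*i+1` in `Fin (2*n)`. -/
def pfHi {n : ℕ} (i : Fin n) : Fin (2 * n) := ⟨2 * i.val + 1, by have := i.isLt; omega⟩

/-- The Pfaffian of a `2n × 2n` matrix, defined as the signed sum over perfect matchings:
`Pf(A) = ∑ sgn(σ) a_{σ(1)σ(2)} ⋯ a_{σ(2n−1)σ(2n)}`, summed over permutations `σ` with
`σ(1) < σ(3) < ⋯ < σ(2n−1)` and `σ(2i−1) < σ(2i)` for all `i`. -/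
def pfaffian {R : Type*} [CommRing R] {n : ℕ} (A : Matrix (Fin (2 * n)) (Fin (2 * n)) R) : R :=
  ∑ σ : Equiv.Perm (Fin (2 * n)),
    if (∀ i : Fin n, σ (pfLo i) < σ (pfHi i)) ∧
        (∀ i j : Fin n, i < j → σ (pfLo i) < σ (pfLo j)) then
      (Equiv.Perm.sign σ : ℤ) • ∏ i : Fin n, A (σ (pfLo i)) (σ (pfHi i))
    else 0


/-- The Pfaffian-tree polynomial `P_m` of the complete `3`-graph on `m = 2d+1` vertices,
expressed for an antisymmetric family `y : Fin m → Fin m → Fin m → R` (thought of as the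
indeterminates `y_{ijk}`): it is `(−1)^{p−1} Pf(Λ^{(p)})` with `p = m` (so the sign is `+1`
since `m` is odd), where `Λ` is the `m × m` skew-symmetric matrix `λ_{ij} = ∑_k y_{ijk}`
and `Λ^{(m)}` deletes the last row and column. -/
def pfTreePoly {R : Type*} [CommRing R] (d : ℕ)
    (y : Fin (2 * d + 1) → Fin (2 * d + 1) → Fin (2 * d + 1) → R) : R :=
  pfaffian (n := d)
    (Matrix.of fun i j : Fin (2 * d) => ∑ k, y i.castSucc j.castSucc k)

/-- The `3`-cycle `(i j k)` (for distinct `i, j, k`) as a permutation of `Fin m`. -/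
def cyc3 {m : ℕ} (i j k : Fin m) : Equiv.Perm (Fin m) :=
  Equiv.swap i k * Equiv.swap i j

/-- The sign `ε` of a list of permutations of `Fin m`: if the product is an `m`-cycle
`(s(1) … s(m))`, i.e. a conjugate `s · (0 1 … m−1) · s⁻¹` of the standard cycle, it is the
sign of (a choice of) `s` — well-defined for odd `m` — and it is `0` otherwise. -/
noncomputable def epsList {m : ℕ} (l : List (Equiv.Perm (Fin m))) : ℤ :=
  if h : ∃ s : Equiv.Perm (Fin m), l.prod = s * finRotate m * s⁻¹ then
    (Equiv.Perm.sign h.choose : ℤ)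
  else 0

/-- A linear key encoding a triple of indices, used to fix an order on triples. -/
def tripleKey {m : ℕ} (t : Fin m × Fin m × Fin m) : ℕ :=
  ((t.1 : ℕ) * m + (t.2.1 : ℕ)) * m + (t.2.2 : ℕ)

open MvPolynomial in
/-- The totally antisymmetric indeterminates `y_{ijk}` of the complete `3`-graph on `Fin m`,
realized in the polynomial ring `MvPolynomial (Fin m × Fin m × Fin m) ℤ` whose genuine
variables are the sorted triples `i < j < k`: `y_{ijk} = ± X_{(sorted triple)}` with the sign
of the sorting permutation, and `0` if two indices coincide. -/
noncomputable def yVar {m : ℕ} (i j k : Fin m) : MvPolynomial (Fin m × Fin m × Fin m) ℤ :=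
  if i < j ∧ j < k then X (i, j, k)
  else if i < k ∧ k < j then -X (i, k, j)
  else if j < i ∧ i < k then -X (j, i, k)
  else if j < k ∧ k < i then X (j, k, i)
  else if k < i ∧ i < j then X (k, i, j)
  else if k < j ∧ j < i then -X (k, j, i)
  else 0


/-! ## Auxiliary development -/

open MvPolynomial in
def pE {d : ℕ} : Fin d × Bool ≃ Fin (2 * d) where
  toFun x := ⟨2 * x.1.val + (if x.2 then 1 else 0), by rcases x with ⟨i, b⟩; have := i.isLt; dsimp; split <;> omega⟩
  invFun q := (⟨q.val / 2, by have := q.isLt; omega⟩, decide (q.val % 2 = 1))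
  left_inv := by
    rintro ⟨i, b⟩
    have h1 : (2 * i.val + (if b then 1 else 0)) / 2 = i.val := by cases b <;> simp <;> omega
    have h2 : decide ((2 * i.val + (if b then 1 else 0)) % 2 = 1) = b := by
      cases b <;> simp <;> omega
    simp only [Prod.mk.injEq, Fin.ext_iff]
    exact ⟨h1, h2⟩
  right_inv := by
    rintro ⟨q, hq⟩
    have h2 : q % 2 = 0 ∨ q % 2 = 1 := by omega
    simp only [Fin.ext_iff]
    rcases h2 with h | h <;> simp [h] <;> omega

variable {d : ℕ}

lemma pE_false (i : Fin d) : pE (i, false) = pfLo i := by simp [pE, pfLo]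
lemma pE_true (i : Fin d) : pE (i, true) = pfHi i := by simp [pE, pfHi]
lemma pE_surj (q : Fin (2*d)) : ∃ i b, q = pE (i, b) := ⟨_, _, (pE.apply_symm_apply q).symm⟩

def bfalse : Fin d → Bool := fun _ => false

def bp (ε : Fin d → Bool) (π : Equiv.Perm (Fin d)) : Equiv.Perm (Fin (2 * d)) :=
  (pE.symm.trans (Equiv.prodShear π (fun i => Function.Involutive.toPerm (xor (ε i)) (fun b => by simp [← Bool.xor_assoc])))).trans pE

lemma bp_apply (ε : Fin d → Bool) (π : Equiv.Perm (Fin d)) (i : Fin d) (b : Bool) :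
    bp ε π (pE (i, b)) = pE (π i, xor (ε i) b) := by
  simp [bp, Equiv.prodShear, Function.Involutive.toPerm]

lemma bp_mul (ε : Fin d → Bool) (π π' : Equiv.Perm (Fin d)) :
    bp bfalse π * bp ε π' = bp ε (π * π') := by
  ext q
  obtain ⟨i, b, rfl⟩ := pE_surj q
  simp only [Equiv.Perm.mul_apply, bp_apply, bfalse, Bool.false_xor]

lemma bp_flip_mul (ε : Fin d → Bool) (π : Equiv.Perm (Fin d)) :
    bp ε π * bp ε 1 = bp bfalse π := by
  ext q
  obtain ⟨i, b, rfl⟩ := pE_surj q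
  simp only [Equiv.Perm.mul_apply, bp_apply]
  rw [Equiv.Perm.one_apply]
  simp [bp_apply, bfalse, ← Bool.xor_assoc]

lemma bp_id : bp (d := d) bfalse 1 = 1 := by
  ext q
  obtain ⟨i, b, rfl⟩ := pE_surj q
  simp [bp_apply, bfalse]

lemma bp_flip_sq (ε : Fin d → Bool) : bp ε 1 * bp ε 1 = 1 := by
  have := bp_flip_mul ε 1
  rwa [bp_id] at this

lemma pfLo_ne_pfHi (i j : Fin d) : pfLo i ≠ pfHi j := by
  simp only [pfLo, pfHi, Fin.ext_iff, ne_eq]; omega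

lemma pfLo_inj {i j : Fin d} (h : i ≠ j) : pfLo i ≠ pfLo j := by
  simp only [pfLo, ne_eq, Fin.ext_iff] at h ⊢; omega

lemma pfHi_inj {i j : Fin d} (h : i ≠ j) : pfHi i ≠ pfHi j := by
  simp only [pfHi, ne_eq, Fin.ext_iff] at h ⊢; omega

lemma bp_swap (a c : Fin d) :
    bp bfalse (Equiv.swap a c) = Equiv.swap (pfLo a) (pfLo c) * Equiv.swap (pfHi a) (pfHi c) := by
  ext q
  obtain ⟨i, b, rfl⟩ := pE_surj q
  simp only [Equiv.Perm.mul_apply, bp_apply, bfalse, Bool.false_xor]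
  cases b
  · rw [pE_false, pE_false,
      Equiv.swap_apply_of_ne_of_ne (pfLo_ne_pfHi _ _) (pfLo_ne_pfHi _ _)]
    rcases eq_or_ne i a with rfl | hia
    · rw [Equiv.swap_apply_left, Equiv.swap_apply_left]
    rcases eq_or_ne i c with rfl | hic
    · rw [Equiv.swap_apply_right, Equiv.swap_apply_right]
    rw [Equiv.swap_apply_of_ne_of_ne hia hic,
      Equiv.swap_apply_of_ne_of_ne (pfLo_inj hia) (pfLo_inj hic)]
  · rw [pE_true, pE_true]
    rcases eq_or_ne i a with rfl | hia
    · rw [Equiv.swap_apply_left, Equiv.swap_apply_left,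
        Equiv.swap_apply_of_ne_of_ne (Ne.symm (pfLo_ne_pfHi _ _)) (Ne.symm (pfLo_ne_pfHi _ _))]
    rcases eq_or_ne i c with rfl | hic
    · rw [Equiv.swap_apply_right, Equiv.swap_apply_right,
        Equiv.swap_apply_of_ne_of_ne (Ne.symm (pfLo_ne_pfHi _ _)) (Ne.symm (pfLo_ne_pfHi _ _))]
    rw [Equiv.swap_apply_of_ne_of_ne hia hic,
      Equiv.swap_apply_of_ne_of_ne (pfHi_inj hia) (pfHi_inj hic),
      Equiv.swap_apply_of_ne_of_ne (Ne.symm (pfLo_ne_pfHi _ _)) (Ne.symm (pfLo_ne_pfHi _ _))]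

lemma sign_bp0 (π : Equiv.Perm (Fin d)) : Equiv.Perm.sign (bp bfalse π) = 1 := by
  refine Equiv.Perm.swap_induction_on π ?_ ?_
  · rw [bp_id]; simp
  · intro f x y hxy ih
    rw [← bp_mul bfalse (Equiv.swap x y) f, map_mul, ih, bp_swap x y]
    simp [Equiv.Perm.sign_swap, pfLo_inj hxy, pfHi_inj hxy]

lemma bp_flip_decomp (ε : Fin d → Bool) (a : Fin d) (ha : ε a = true) :
    bp ε 1 = Equiv.swap (pfLo a) (pfHi a) * bp (Function.update ε a false) 1 := by
  ext q
  obtain ⟨i, b, rfl⟩ := pE_surj q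
  simp only [Equiv.Perm.mul_apply, bp_apply, Equiv.Perm.one_apply]
  rcases eq_or_ne i a with rfl | hia
  · rw [Function.update_self, Bool.false_xor, ha]
    cases b
    · rw [Bool.xor_false, pE_true, pE_false, Equiv.swap_apply_left]
    · rw [Bool.xor_self, pE_false, pE_true, Equiv.swap_apply_right]
  · rw [Function.update_of_ne hia]
    cases hc : xor (ε i) b
    · rw [pE_false, Equiv.swap_apply_of_ne_of_ne (pfLo_inj hia) (pfLo_ne_pfHi i a)]
    · rw [pE_true, Equiv.swap_apply_of_ne_of_ne (Ne.symm (pfLo_ne_pfHi _ _)) (pfHi_inj hia)]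

lemma sign_bp_flip : ∀ (s : Finset (Fin d)) (ε : Fin d → Bool), (∀ i, ε i = true → i ∈ s) →
    Equiv.Perm.sign (bp ε 1) = ∏ i : Fin d, (if ε i then (-1 : ℤˣ) else 1) := by
  intro s
  induction s using Finset.induction_on with
  | empty =>
    intro ε hε
    have : ε = bfalse := by
      funext i; cases h : ε i
      · rfl
      · exact absurd (hε i h) (Finset.notMem_empty i)
    subst this
    rw [bp_id]
    simp [bfalse]
  | @insert a s ha ih =>
    intro ε hε
    cases hεa : ε a
    · refine ih ε (fun i hi => ?_)
      rcases Finset.mem_insert.mp (hε i hi) with rfl | h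
      · rw [hεa] at hi; exact absurd hi (by simp)
      · exact h
    · rw [bp_flip_decomp ε a hεa, map_mul,
        Equiv.Perm.sign_swap (pfLo_ne_pfHi a a),
        ih (Function.update ε a false) ?hsupp]
      case hsupp =>
        intro i hi
        rcases eq_or_ne i a with rfl | hia
        · rw [Function.update_self] at hi; exact absurd hi (by simp)
        · rw [Function.update_of_ne hia] at hi
          rcases Finset.mem_insert.mp (hε i hi) with rfl | h
          · exact absurd rfl hia
          · exact h
      rw [← Finset.mul_prod_erase _ _ (Finset.mem_univ a),
        ← Finset.mul_prod_erase _ (fun i => if ε i then (-1 : ℤˣ) else 1) (Finset.mem_univ a),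
        Function.update_self, hεa]
      simp only [if_false, if_true]
      rw [Finset.prod_congr rfl (fun i hi => by
        rw [Function.update_of_ne (Finset.ne_of_mem_erase hi)])]
      simp

lemma sign_bp (ε : Fin d → Bool) (π : Equiv.Perm (Fin d)) :
    Equiv.Perm.sign (bp ε π) = ∏ i : Fin d, (if ε i then (-1 : ℤˣ) else 1) := by
  have h1 : bp bfalse π * bp ε 1 = bp ε π := by rw [bp_mul, mul_one]
  rw [← h1, map_mul, sign_bp0, one_mul, sign_bp_flip Finset.univ ε (fun i _ => Finset.mem_univ i)]

variable {R : Type*} [CommRing R]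

def pfTerm (A : Matrix (Fin (2 * d)) (Fin (2 * d)) R) (σ : Equiv.Perm (Fin (2 * d))) : R :=
  (Equiv.Perm.sign σ : ℤ) • ∏ i : Fin d, A (σ (pfLo i)) (σ (pfHi i))

lemma bp_lo (ε : Fin d → Bool) (π : Equiv.Perm (Fin d)) (i : Fin d) :
    bp ε π (pfLo i) = if ε i then pfHi (π i) else pfLo (π i) := by
  rw [← pE_false, bp_apply]; cases h : ε i <;> simp [pE_false, pE_true]

lemma bp_hi (ε : Fin d → Bool) (π : Equiv.Perm (Fin d)) (i : Fin d) :
    bp ε π (pfHi i) = if ε i then pfLo (π i) else pfHi (π i) := by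
  rw [← pE_true, bp_apply]; cases h : ε i <;> simp [pE_false, pE_true]

lemma pfTerm_invariant (A : Matrix (Fin (2 * d)) (Fin (2 * d)) R)
    (hskew : ∀ a b, A b a = - A a b)
    (σ : Equiv.Perm (Fin (2 * d))) (ε : Fin d → Bool) (π : Equiv.Perm (Fin d)) :
    pfTerm A (σ * bp ε π) = pfTerm A σ := by
  unfold pfTerm
  set u : ℤˣ := ∏ i : Fin d, (if ε i then (-1 : ℤˣ) else 1) with hu
  have hu2 : u * u = 1 := by
    rw [hu, ← Finset.prod_mul_distrib]
    apply Finset.prod_eq_one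
    intro i _
    cases h : ε i <;> simp
  have hv : (∏ i : Fin d, (if ε i then (-1 : R) else 1)) = (((u : ℤ) : R)) := by
    have h0 : (((u : ℤ) : R)) = ((Int.castRingHom R).toMonoidHom.comp (Units.coeHom ℤ)) u := rfl
    rw [h0, hu, map_prod]
    refine (Finset.prod_congr rfl (fun i _ => ?_))
    cases h : ε i <;> simp
  have hprod : ∏ i : Fin d, A ((σ * bp ε π) (pfLo i)) ((σ * bp ε π) (pfHi i))
      = (∏ i : Fin d, (if ε i then (-1 : R) else 1)) * ∏ i : Fin d, A (σ (pfLo i)) (σ (pfHi i)) := by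
    have step : ∀ i, A ((σ * bp ε π) (pfLo i)) ((σ * bp ε π) (pfHi i))
        = (if ε i then (-1:R) else 1) * A (σ (pfLo (π i))) (σ (pfHi (π i))) := by
      intro i
      simp only [Equiv.Perm.mul_apply, bp_lo, bp_hi]
      cases h : ε i
      · simp
      · simp [hskew (σ (pfLo (π i))) (σ (pfHi (π i)))]
    rw [Finset.prod_congr rfl (fun i _ => step i), Finset.prod_mul_distrib]
    congr 1
    exact Equiv.prod_comp π (fun j => A (σ (pfLo j)) (σ (pfHi j)))
  rw [hprod, map_mul, sign_bp, ← hu, hv]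
  set P := ∏ i : Fin d, A (σ (pfLo i)) (σ (pfHi i)) with hP
  rw [Units.val_mul, zsmul_eq_mul, zsmul_eq_mul, Int.cast_mul]
  have h2 : ((u : ℤ) : R) * ((u : ℤ) : R) = 1 := by
    rw [← Int.cast_mul, ← Units.val_mul, hu2, Units.val_one, Int.cast_one]
  calc (((Equiv.Perm.sign σ : ℤ) : R)) * ((u:ℤ):R) * (((u:ℤ):R) * P)
      = (((Equiv.Perm.sign σ : ℤ):R)) * (((u:ℤ):R) * ((u:ℤ):R)) * P := by ring
    _ = (((Equiv.Perm.sign σ : ℤ):R)) * P := by rw [h2]; ring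

def pfCond {d : ℕ} (σ : Equiv.Perm (Fin (2 * d))) : Prop :=
  (∀ i : Fin d, σ (pfLo i) < σ (pfHi i)) ∧ (∀ i j : Fin d, i < j → σ (pfLo i) < σ (pfLo j))

instance : DecidablePred (pfCond (d := d)) := fun _ => by unfold pfCond; infer_instance

lemma pfLo_injective : Function.Injective (pfLo (n := d)) := by
  intro i j h
  simp only [pfLo, Fin.mk.injEq, Fin.ext_iff] at h ⊢
  omega

def canEps (σ : Equiv.Perm (Fin (2 * d))) : Fin d → Bool :=
  fun i => decide (σ (pfHi i) < σ (pfLo i))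

def canSig1 (σ : Equiv.Perm (Fin (2 * d))) : Equiv.Perm (Fin (2 * d)) :=
  σ * bp (canEps σ) 1

lemma canSig1_lt (σ : Equiv.Perm (Fin (2 * d))) (i : Fin d) :
    canSig1 σ (pfLo i) < canSig1 σ (pfHi i) := by
  unfold canSig1
  rw [Equiv.Perm.mul_apply, Equiv.Perm.mul_apply, bp_lo, bp_hi]
  by_cases h : σ (pfHi i) < σ (pfLo i)
  · have he : canEps σ i = true := by simp [canEps, h]
    rw [he]
    simp only [if_pos rfl, Equiv.Perm.one_apply]
    exact h
  · have he : canEps σ i = false := by simp [canEps, h]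
    rw [he]
    simp only [Bool.false_eq_true, if_false, Equiv.Perm.one_apply]
    exact lt_of_le_of_ne (not_lt.mp h) (fun he2 => (pfLo_ne_pfHi i i) (σ.injective he2))

def canS (σ : Equiv.Perm (Fin (2 * d))) : Equiv.Perm (Fin d) :=
  Tuple.sort (fun i => canSig1 σ (pfLo i))

def canSig0 (σ : Equiv.Perm (Fin (2 * d))) : Equiv.Perm (Fin (2 * d)) :=
  canSig1 σ * bp bfalse (canS σ)

lemma canSig0_lo (σ : Equiv.Perm (Fin (2 * d))) (i : Fin d) :
    canSig0 σ (pfLo i) = canSig1 σ (pfLo (canS σ i)) := by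
  rw [canSig0, Equiv.Perm.mul_apply, bp_lo]
  simp [bfalse]

lemma canSig0_hi (σ : Equiv.Perm (Fin (2 * d))) (i : Fin d) :
    canSig0 σ (pfHi i) = canSig1 σ (pfHi (canS σ i)) := by
  rw [canSig0, Equiv.Perm.mul_apply, bp_hi]
  simp [bfalse]

lemma canF_inj (σ : Equiv.Perm (Fin (2 * d))) :
    Function.Injective (fun i => canSig1 σ (pfLo i)) := by
  intro i j h
  exact pfLo_injective ((canSig1 σ).injective h)

lemma canSig0_cond (σ : Equiv.Perm (Fin (2 * d))) : pfCond (canSig0 σ) := by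
  constructor
  · intro i
    rw [canSig0_lo, canSig0_hi]
    exact canSig1_lt σ (canS σ i)
  · intro i j hij
    rw [canSig0_lo, canSig0_lo]
    have hm : StrictMono ((fun i => canSig1 σ (pfLo i)) ∘ ⇑(canS σ)) :=
      (Tuple.monotone_sort _).strictMono_of_injective ((canF_inj σ).comp (canS σ).injective)
    exact hm hij

def PhiMap (x : ((Fin d → Bool) × Equiv.Perm (Fin d)) × {σ : Equiv.Perm (Fin (2 * d)) // pfCond σ}) :
    Equiv.Perm (Fin (2 * d)) := x.2.val * bp x.1.1 x.1.2

def PsiMap (σ : Equiv.Perm (Fin (2 * d))) :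
    ((Fin d → Bool) × Equiv.Perm (Fin d)) × {σ : Equiv.Perm (Fin (2 * d)) // pfCond σ} :=
  ((canEps σ, (canS σ)⁻¹), ⟨canSig0 σ, canSig0_cond σ⟩)

lemma Phi_Psi (σ : Equiv.Perm (Fin (2 * d))) : PhiMap (PsiMap σ) = σ := by
  show canSig0 σ * bp (canEps σ) (canS σ)⁻¹ = σ
  rw [canSig0, canSig1, mul_assoc, bp_mul, mul_inv_cancel, mul_assoc, bp_flip_sq, mul_one]

lemma Psi_Phi (x : ((Fin d → Bool) × Equiv.Perm (Fin d)) × {σ : Equiv.Perm (Fin (2 * d)) // pfCond σ}) :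
    PsiMap (PhiMap x) = x := by
  obtain ⟨⟨ε, π⟩, ⟨σ₀, hσ₀⟩⟩ := x
  show PsiMap (σ₀ * bp ε π) = ((ε, π), ⟨σ₀, hσ₀⟩)
  have hlo : ∀ i, (σ₀ * bp ε π) (pfLo i) = σ₀ (if ε i then pfHi (π i) else pfLo (π i)) := by
    intro i; rw [Equiv.Perm.mul_apply, bp_lo]
  have hhi : ∀ i, (σ₀ * bp ε π) (pfHi i) = σ₀ (if ε i then pfLo (π i) else pfHi (π i)) := by
    intro i; rw [Equiv.Perm.mul_apply, bp_hi]
  have heps : canEps (σ₀ * bp ε π) = ε := by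
    funext i
    rw [canEps, hlo, hhi]
    cases h : ε i
    · simp only [Bool.false_eq_true, if_false]
      exact decide_eq_false (not_lt.mpr (le_of_lt (hσ₀.1 (π i))))
    · simp only [if_true]
      exact decide_eq_true (hσ₀.1 (π i))
  have hsig1 : canSig1 (σ₀ * bp ε π) = σ₀ * bp bfalse π := by
    rw [canSig1, heps, mul_assoc, bp_flip_mul]
  have hg : StrictMono (fun j => σ₀ (pfLo j)) := by
    intro i j hij
    exact hσ₀.2 i j hij
  have hfg : (fun i => canSig1 (σ₀ * bp ε π) (pfLo i)) = (fun j => σ₀ (pfLo j)) ∘ ⇑π := by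
    funext i
    rw [hsig1, Equiv.Perm.mul_apply, bp_lo]
    simp [bfalse]
  have hs : canS (σ₀ * bp ε π) = π⁻¹ := by
    rw [canS]
    refine (Tuple.eq_sort_iff.mpr ⟨?_, ?_⟩).symm
    · intro i j hij
      rw [hfg]
      simp only [Function.comp_apply, Equiv.Perm.coe_inv, Equiv.apply_symm_apply]
      exact hg.monotone hij
    · intro i j hij he
      have e1 := congrFun hfg (π⁻¹ i)
      have e2 := congrFun hfg (π⁻¹ j)
      simp only [Function.comp_apply, Equiv.Perm.coe_inv, Equiv.apply_symm_apply] at e1 e2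
      rw [← Equiv.Perm.coe_inv] at e1 e2
      rw [e1, e2] at he
      exact absurd he (ne_of_lt (hg hij))
  have hsig0 : canSig0 (σ₀ * bp ε π) = σ₀ := by
    rw [canSig0, hsig1, hs, mul_assoc, bp_mul, mul_inv_cancel, bp_id, mul_one]
  unfold PsiMap
  simp [Prod.ext_iff, Subtype.ext_iff, heps, hs, hsig0]

lemma sum_pfTerm (A : Matrix (Fin (2 * d)) (Fin (2 * d)) R)
    (hskew : ∀ a b, A b a = - A a b) :
    ∑ σ : Equiv.Perm (Fin (2 * d)), pfTerm A σ = (2 ^ d * Nat.factorial d) • pfaffian A := by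
  classical
  have h1 : pfaffian A = ∑ σ : Equiv.Perm (Fin (2 * d)), if pfCond σ then pfTerm A σ else 0 := by
    rw [pfaffian]
    refine Finset.sum_congr rfl (fun σ _ => ?_)
    simp only [pfCond, pfTerm]
  have h2 : pfaffian A = ∑ σ₀ : {σ : Equiv.Perm (Fin (2 * d)) // pfCond σ}, pfTerm A σ₀.val := by
    rw [h1, ← Finset.sum_filter]
    exact Finset.sum_subtype (p := pfCond (d := d)) _ (fun x => by simp) (pfTerm A)
  have h3 : ∑ σ : Equiv.Perm (Fin (2 * d)), pfTerm A σ
      = ∑ x : ((Fin d → Bool) × Equiv.Perm (Fin d)) × {σ : Equiv.Perm (Fin (2 * d)) // pfCond σ},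
          pfTerm A x.2.val := by
    refine (Fintype.sum_bijective PhiMap
      (Function.bijective_iff_has_inverse.mpr ⟨PsiMap, Psi_Phi, Phi_Psi⟩)
      _ _ (fun x => ?_)).symm
    exact (pfTerm_invariant A hskew x.2.val x.1.1 x.1.2).symm
  rw [h3, Fintype.sum_prod_type, h2]
  simp only [Finset.sum_const, Finset.card_univ, Fintype.card_prod, Fintype.card_fun,
    Fintype.card_perm, Fintype.card_bool, Fintype.card_fin]

section Vanish
variable {d : ℕ}

/-- single basis vector -/
def sgl (j : Fin (2 * d)) : Fin (2 * d) → R := Pi.single j 1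

lemma det_single_perm (σ : Equiv.Perm (Fin (2 * d))) :
    Matrix.detRowAlternating (R := R) (fun r => sgl (σ r)) = ((Equiv.Perm.sign σ : ℤ) : R) := by
  have h : (fun r => sgl (R := R) (σ r)) = Equiv.Perm.permMatrix R σ := by
    funext r c
    simp [sgl, Pi.single_apply, Equiv.Perm.permMatrix, PEquiv.toMatrix_apply,
      Equiv.toPEquiv_apply, eq_comm]
  rw [h]
  exact Matrix.det_permutation σ

/-- the unrestricted coefficient-times-determinant function -/
def gfun (A : Matrix (Fin (2 * d)) (Fin (2 * d)) R) (f : Fin (2 * d) → Fin (2 * d)) : R :=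
  (∏ i : Fin d, A (f (pfLo i)) (f (pfHi i))) * Matrix.detRowAlternating (R := R) (fun r => sgl (f r))

lemma gfun_perm (A : Matrix (Fin (2 * d)) (Fin (2 * d)) R) (σ : Equiv.Perm (Fin (2 * d))) :
    gfun A ⇑σ = pfTerm A σ := by
  rw [gfun, det_single_perm, pfTerm, zsmul_eq_mul, mul_comm]

lemma gfun_eq_zero (A : Matrix (Fin (2 * d)) (Fin (2 * d)) R) (f : Fin (2 * d) → Fin (2 * d))
    (hf : ¬ Function.Injective f) : gfun A f = 0 := by
  rw [Function.not_injective_iff] at hf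
  obtain ⟨r, r', hrr, hne⟩ := hf
  rw [gfun, AlternatingMap.map_eq_zero_of_eq _ _ (by rw [hrr]) hne, mul_zero]

lemma stepA (A : Matrix (Fin (2 * d)) (Fin (2 * d)) R) :
    ∑ σ : Equiv.Perm (Fin (2 * d)), pfTerm A σ = ∑ f : Fin (2 * d) → Fin (2 * d), gfun A f := by
  classical
  have h1 : ∑ σ : Equiv.Perm (Fin (2 * d)), pfTerm A σ
      = ∑ f ∈ Finset.univ.image (fun σ : Equiv.Perm (Fin (2 * d)) => ⇑σ), gfun A f := by
    rw [Finset.sum_image (fun x _ y _ h => Equiv.coe_fn_injective h)]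
    exact Finset.sum_congr rfl (fun σ _ => (gfun_perm A σ).symm)
  rw [h1]
  refine Finset.sum_subset (Finset.subset_univ _) (fun f _ hf => ?_)
  refine gfun_eq_zero A f (fun hinj => hf ?_)
  have hbij : Function.Bijective f := ⟨hinj, Finite.surjective_of_injective hinj⟩
  refine Finset.mem_image.mpr ⟨Equiv.ofBijective f hbij, Finset.mem_univ _, rfl⟩

/-- combine two half-assignments -/
def cmb (x y : Fin d → Fin (2 * d)) (r : Fin (2 * d)) : Fin (2 * d) :=
  if (pE.symm r).2 then y (pE.symm r).1 else x (pE.symm r).1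

lemma cmb_lo (x y : Fin d → Fin (2 * d)) (i : Fin d) : cmb x y (pfLo i) = x i := by
  unfold cmb
  rw [← pE_false i, Equiv.symm_apply_apply]
  simp

lemma cmb_hi (x y : Fin d → Fin (2 * d)) (i : Fin d) : cmb x y (pfHi i) = y i := by
  unfold cmb
  rw [← pE_true i, Equiv.symm_apply_apply]
  simp

def ecmb : ((Fin d → Fin (2 * d)) × (Fin d → Fin (2 * d))) ≃ (Fin (2 * d) → Fin (2 * d)) where
  toFun p := cmb p.1 p.2
  invFun f := (fun i => f (pfLo i), fun i => f (pfHi i))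
  left_inv := by
    rintro ⟨x, y⟩
    refine Prod.ext (funext fun i => ?_) (funext fun i => ?_)
    · exact cmb_lo x y i
    · exact cmb_hi x y i
  right_inv := by
    intro f
    funext r
    obtain ⟨i, b, rfl⟩ := pE_surj r
    show cmb _ _ (pE (i, b)) = f (pE (i, b))
    unfold cmb
    rw [Equiv.symm_apply_apply]
    cases b
    · rw [if_neg (by simp), pE_false]
    · rw [if_pos (by simp), pE_true]

lemma stepB (A : Matrix (Fin (2 * d)) (Fin (2 * d)) R) :
    ∑ f : Fin (2 * d) → Fin (2 * d), gfun A f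
      = ∑ x : Fin d → Fin (2 * d), ∑ y : Fin d → Fin (2 * d), gfun A (cmb x y) := by
  rw [← Equiv.sum_comp (ecmb (d := d)) (gfun A), Fintype.sum_prod_type]
  rfl

end Vanish

section Telescope
variable {d : ℕ}

def zv (hd : 0 < d) : Fin (2 * d) := pfLo ⟨0, hd⟩

def gv (hd : 0 < d) (j : Fin (2 * d)) : Fin (2 * d) → R := sgl j - sgl (zv hd)

def rowsF (hd : 0 < d) (s : Finset (Fin (2 * d))) (x y : Fin d → Fin (2 * d)) :
    Fin (2 * d) → (Fin (2 * d) → R) :=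
  fun r => if r ∈ s then gv hd (cmb x y r) else sgl (cmb x y r)

def WF (hd : 0 < d) (A : Matrix (Fin (2 * d)) (Fin (2 * d)) R) (s : Finset (Fin (2 * d))) : R :=
  ∑ x : Fin d → Fin (2 * d), ∑ y : Fin d → Fin (2 * d),
    (∏ i : Fin d, A (x i) (y i)) * Matrix.detRowAlternating (R := R) (rowsF hd s x y)

lemma WF_empty (hd : 0 < d) (A : Matrix (Fin (2 * d)) (Fin (2 * d)) R) :
    WF hd A ∅ = ∑ x : Fin d → Fin (2 * d), ∑ y : Fin d → Fin (2 * d), gfun A (cmb x y) := by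
  have h1 : ∀ x y : Fin d → Fin (2 * d), rowsF (R := R) hd ∅ x y = fun r => sgl (cmb x y r) := by
    intro x y; funext r; rw [rowsF, if_neg (Finset.notMem_empty r)]
  have h2 : ∀ x y : Fin d → Fin (2 * d),
      (∏ i : Fin d, A (cmb x y (pfLo i)) (cmb x y (pfHi i))) = ∏ i : Fin d, A (x i) (y i) :=
    fun x y => Finset.prod_congr rfl (fun i _ => by rw [cmb_lo, cmb_hi])
  unfold WF gfun
  refine Finset.sum_congr rfl (fun x _ => Finset.sum_congr rfl (fun y _ => ?_))
  rw [h1, h2]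

lemma sum_factor_zero {ι κ : Type*} [Fintype ι] [DecidableEq ι] [Fintype κ]
    (i₀ : ι) (q₀ : κ) (φ : κ → R) (G : (ι → κ) → R)
    (hφ : ∑ v : κ, φ v = 0) (hG : ∀ x v, G (Function.update x i₀ v) = G x) :
    ∑ x : ι → κ, φ (x i₀) * G x = 0 := by
  classical
  have h1 : ∀ x : ι → κ, φ (x i₀) * G x = φ (x i₀) * G (Function.update x i₀ q₀) := by
    intro x; rw [hG]
  rw [Finset.sum_congr rfl (fun x _ => h1 x)]
  let e : (ι → κ) ≃ κ × {x : ι → κ // x i₀ = q₀} :=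
    { toFun := fun x => (x i₀, ⟨Function.update x i₀ q₀, Function.update_self _ _ _⟩)
      invFun := fun p => Function.update p.2.val i₀ p.1
      left_inv := by
        intro x
        simp only [Function.update_idem, Function.update_eq_self]
      right_inv := by
        rintro ⟨v, ⟨x₀, hx₀⟩⟩
        refine Prod.ext (Function.update_self _ _ _) (Subtype.ext ?_)
        simp only [Function.update_idem]
        rw [← hx₀, Function.update_eq_self]
      }
  rw [← Equiv.sum_comp e.symm (fun x => φ (x i₀) * G (Function.update x i₀ q₀))]
  rw [Fintype.sum_prod_type]
  have h2 : ∀ (v : κ) (w : {x : ι → κ // x i₀ = q₀}),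
      φ ((e.symm (v, w)) i₀) * G (Function.update (e.symm (v, w)) i₀ q₀) = φ v * G w.val := by
    rintro v ⟨x₀, hx₀⟩
    simp only [e, Equiv.coe_fn_symm_mk, Function.update_self, Function.update_idem]
    rw [← hx₀, Function.update_eq_self]
  rw [Finset.sum_congr rfl (fun v _ => Finset.sum_congr rfl (fun w _ => h2 v w))]
  rw [← Finset.sum_mul_sum]
  rw [hφ, zero_mul]

lemma cmb_update_x (x y : Fin d → Fin (2 * d)) (i₀ : Fin d) (v : Fin (2 * d))
    (r : Fin (2 * d)) (hr : r ≠ pfLo i₀) :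
    cmb (Function.update x i₀ v) y r = cmb x y r := by
  obtain ⟨i, b, rfl⟩ := pE_surj r
  cases b
  · rw [pE_false] at hr ⊢
    rw [cmb_lo, cmb_lo, Function.update_of_ne (fun h => hr (by rw [h]))]
  · rw [pE_true] at hr ⊢
    rw [cmb_hi, cmb_hi]

lemma cmb_update_y (x y : Fin d → Fin (2 * d)) (i₀ : Fin d) (v : Fin (2 * d))
    (r : Fin (2 * d)) (hr : r ≠ pfHi i₀) :
    cmb x (Function.update y i₀ v) r = cmb x y r := by
  obtain ⟨i, b, rfl⟩ := pE_surj r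
  cases b
  · rw [pE_false] at hr ⊢
    rw [cmb_lo, cmb_lo]
  · rw [pE_true] at hr ⊢
    rw [cmb_hi, cmb_hi, Function.update_of_ne (fun h => hr (by rw [h]))]

lemma WF_insert (hd : 0 < d) (A : Matrix (Fin (2 * d)) (Fin (2 * d)) R)
    (hcol : ∀ b, ∑ a, A a b = 0) (hrow : ∀ a, ∑ b, A a b = 0)
    (s : Finset (Fin (2 * d))) (r₀ : Fin (2 * d)) (hr₀ : r₀ ∉ s) :
    WF hd A (insert r₀ s) = WF hd A s := by
  classical
  have hrows1 : ∀ x y, rowsF (R := R) hd (insert r₀ s) x y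
      = Function.update (rowsF hd s x y) r₀ (gv hd (cmb x y r₀)) := by
    intro x y
    funext r
    rcases eq_or_ne r r₀ with rfl | hne
    · rw [Function.update_self, rowsF, if_pos (Finset.mem_insert_self r s)]
    · rw [Function.update_of_ne hne, rowsF, rowsF]
      congr 1
      simp [Finset.mem_insert, hne]
  have hrows2 : ∀ x y, rowsF (R := R) hd s x y
      = Function.update (rowsF hd s x y) r₀ (sgl (cmb x y r₀)) := by
    intro x y
    funext r
    rcases eq_or_ne r r₀ with rfl | hne
    · rw [Function.update_self, rowsF, if_neg hr₀]
    · rw [Function.update_of_ne hne]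
  have hD : ∀ x y, Matrix.detRowAlternating (R := R) (rowsF hd (insert r₀ s) x y)
      = Matrix.detRowAlternating (R := R) (rowsF hd s x y)
        + Matrix.detRowAlternating (R := R)
            (Function.update (rowsF hd s x y) r₀ (-(sgl (zv hd)))) := by
    intro x y
    rw [hrows1 x y]
    have : gv (R := R) hd (cmb x y r₀) = sgl (cmb x y r₀) + (-(sgl (zv hd))) := by
      rw [gv, sub_eq_add_neg]
    rw [this, AlternatingMap.map_update_add]
    congr 1
    rw [← hrows2]
  unfold WF
  rw [Finset.sum_congr rfl (fun x _ => Finset.sum_congr rfl (fun y _ => by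
    rw [hD x y, mul_add]))]
  rw [Finset.sum_congr rfl (fun x (_ : x ∈ Finset.univ) => Finset.sum_add_distrib),
    Finset.sum_add_distrib]
  have hzero : ∑ x : Fin d → Fin (2 * d), ∑ y : Fin d → Fin (2 * d),
      (∏ i : Fin d, A (x i) (y i)) *
        Matrix.detRowAlternating (R := R)
          (Function.update (rowsF hd s x y) r₀ (-(sgl (zv hd)))) = 0 := by
    obtain ⟨i₀, b, rfl⟩ := pE_surj r₀
    cases b
    · -- r₀ = pfLo i₀ : sum over x vanishes (column sums)
      rw [Finset.sum_comm]
      refine Finset.sum_eq_zero (fun y _ => ?_)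
      have hsplit : ∀ x : Fin d → Fin (2 * d), (∏ i : Fin d, A (x i) (y i))
          = A (x i₀) (y i₀) * ∏ i ∈ Finset.univ.erase i₀, A (x i) (y i) := by
        intro x
        exact (Finset.mul_prod_erase Finset.univ (fun i => A (x i) (y i)) (Finset.mem_univ i₀)).symm
      rw [Finset.sum_congr rfl (fun x _ => by rw [hsplit x, mul_assoc])]
      refine sum_factor_zero i₀ (zv hd) (fun v => A v (y i₀))
        (fun x => (∏ i ∈ Finset.univ.erase i₀, A (x i) (y i)) *
          Matrix.detRowAlternating (R := R)
            (Function.update (rowsF hd s x y) (pE (i₀, false)) (-(sgl (zv hd)))))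
        (hcol (y i₀)) (fun x v => ?_)
      beta_reduce
      congr 1
      · refine Finset.prod_congr rfl (fun i hi => ?_)
        rw [Function.update_of_ne (Finset.ne_of_mem_erase hi)]
      · congr 1
        funext r
        rcases eq_or_ne r (pE (i₀, false)) with rfl | hne
        · rw [Function.update_self, Function.update_self]
        · rw [Function.update_of_ne hne, Function.update_of_ne hne, rowsF, rowsF]
          have hc : cmb (Function.update x i₀ v) y r = cmb x y r := by
            refine cmb_update_x x y i₀ v r ?_
            rw [← pE_false]; exact hne
          rw [hc]
    · -- r₀ = pfHi i₀ : sum over y vanishes (row sums)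
      refine Finset.sum_eq_zero (fun x _ => ?_)
      have hsplit : ∀ y : Fin d → Fin (2 * d), (∏ i : Fin d, A (x i) (y i))
          = A (x i₀) (y i₀) * ∏ i ∈ Finset.univ.erase i₀, A (x i) (y i) := by
        intro y
        exact (Finset.mul_prod_erase Finset.univ (fun i => A (x i) (y i)) (Finset.mem_univ i₀)).symm
      rw [Finset.sum_congr rfl (fun y _ => by rw [hsplit y, mul_assoc])]
      refine sum_factor_zero i₀ (zv hd) (fun v => A (x i₀) v)
        (fun y => (∏ i ∈ Finset.univ.erase i₀, A (x i) (y i)) *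
          Matrix.detRowAlternating (R := R)
            (Function.update (rowsF hd s x y) (pE (i₀, true)) (-(sgl (zv hd)))))
        (hrow (x i₀)) (fun y v => ?_)
      beta_reduce
      congr 1
      · refine Finset.prod_congr rfl (fun i hi => ?_)
        rw [Function.update_of_ne (Finset.ne_of_mem_erase hi)]
      · congr 1
        funext r
        rcases eq_or_ne r (pE (i₀, true)) with rfl | hne
        · rw [Function.update_self, Function.update_self]
        · rw [Function.update_of_ne hne, Function.update_of_ne hne, rowsF, rowsF]
          have hc : cmb x (Function.update y i₀ v) r = cmb x y r := by
            refine cmb_update_y x y i₀ v r ?_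
            rw [← pE_true]; exact hne
          rw [hc]
  rw [hzero, add_zero]

lemma WF_univ (hd : 0 < d) (A : Matrix (Fin (2 * d)) (Fin (2 * d)) R) :
    WF hd A Finset.univ = 0 := by
  classical
  unfold WF
  refine Finset.sum_eq_zero (fun x _ => Finset.sum_eq_zero (fun y _ => ?_))
  have hrows : rowsF (R := R) hd Finset.univ x y = fun r => gv hd (cmb x y r) := by
    funext r
    rw [rowsF, if_pos (Finset.mem_univ r)]
  rw [hrows]
  by_cases hz : ∃ r, cmb x y r = zv hd
  · obtain ⟨r, hr⟩ := hz
    have h0 : (fun r => gv (R := R) hd (cmb x y r)) r = 0 := by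
      simp only [hr, gv, sub_self]
    rw [AlternatingMap.map_coord_zero (Matrix.detRowAlternating (R := R)) r h0, mul_zero]
  · push_neg at hz
    have hns : ¬ Function.Surjective (cmb x y) := by
      intro hs
      obtain ⟨r, hr⟩ := hs (zv hd)
      exact hz r hr
    have hni : ¬ Function.Injective (cmb x y) := fun hi =>
      hns (Finite.injective_iff_surjective.mp hi)
    rw [Function.not_injective_iff] at hni
    obtain ⟨r, r', hrr, hne⟩ := hni
    rw [AlternatingMap.map_eq_zero_of_eq _ _ (by rw [hrr]) hne, mul_zero]

lemma sum_pfTerm_eq_zero (hd : 0 < d) (A : Matrix (Fin (2 * d)) (Fin (2 * d)) R)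
    (hcol : ∀ b, ∑ a, A a b = 0) (hrow : ∀ a, ∑ b, A a b = 0) :
    ∑ σ : Equiv.Perm (Fin (2 * d)), pfTerm A σ = 0 := by
  classical
  have hconst : ∀ s : Finset (Fin (2 * d)), WF hd A s = WF hd A ∅ := by
    intro s
    induction s using Finset.induction_on with
    | empty => rfl
    | @insert a s ha ih => rw [WF_insert hd A hcol hrow s a ha, ih]
  have h1 := hconst Finset.univ
  rw [WF_univ hd A] at h1
  rw [stepA, stepB, ← WF_empty hd A, ← h1]

end Telescope

/-! ### application layer -/
open MvPolynomial

theorem yswap12' {m : ℕ} (i j k : Fin m) : yVar j i k = - yVar i j k := by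
  unfold yVar
  rcases lt_trichotomy i j with h1 | h1 | h1 <;>
    rcases lt_trichotomy i k with h2 | h2 | h2 <;>
      rcases lt_trichotomy j k with h3 | h3 | h3 <;>
        subst_vars <;>
        simp_all [lt_asymm, lt_irrefl, le_of_lt, not_lt_of_gt] <;>
        first
          | ring1
          | (exact absurd (lt_trans h1 h3) (lt_asymm h2))
          | (exact absurd (lt_trans h2 h3) (lt_asymm h1))
          | (exact absurd (lt_trans h3 h1) (lt_asymm h2))
          | (exact absurd (lt_trans h3 h2) (lt_asymm h1))

theorem yswap23' {m : ℕ} (i j k : Fin m) : yVar i k j = - yVar i j k := by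
  unfold yVar
  rcases lt_trichotomy i j with h1 | h1 | h1 <;>
    rcases lt_trichotomy i k with h2 | h2 | h2 <;>
      rcases lt_trichotomy j k with h3 | h3 | h3 <;>
        subst_vars <;>
        simp_all [lt_asymm, lt_irrefl, le_of_lt, not_lt_of_gt] <;>
        first
          | ring1
          | (exact absurd (lt_trans h1 h3) (lt_asymm h2))
          | (exact absurd (lt_trans h2 h3) (lt_asymm h1))
          | (exact absurd (lt_trans h3 h1) (lt_asymm h2))
          | (exact absurd (lt_trans h3 h2) (lt_asymm h1))

theorem yswap13' {m : ℕ} (i j k : Fin m) : yVar k j i = - yVar i j k := by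
  rw [show yVar k j i = - yVar j k i from yswap12' j k i,
    show yVar j k i = - yVar j i k from yswap23' j i k,
    show yVar j i k = - yVar i j k from yswap12' i j k]
  ring

theorem yVar_classify {m : ℕ} (i j k : Fin m) :
    ∃ (ε : ℤ) (τ : Fin m × Fin m × Fin m), yVar i j k = ε • X τ ∧
      (∀ x : Fin m, (x = i ∨ x = j ∨ x = k) → x = τ.1 ∨ x = τ.2.1 ∨ x = τ.2.2) := by
  unfold yVar
  split_ifs
  · exact ⟨1, (i, j, k), by rw [one_smul], by tauto⟩
  · exact ⟨-1, (i, k, j), by rw [neg_smul, one_smul], by tauto⟩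
  · exact ⟨-1, (j, i, k), by rw [neg_smul, one_smul], by tauto⟩
  · exact ⟨1, (j, k, i), by rw [one_smul], by tauto⟩
  · exact ⟨1, (k, i, j), by rw [one_smul], by tauto⟩
  · exact ⟨-1, (k, j, i), by rw [neg_smul, one_smul], by tauto⟩
  · exact ⟨0, (i, j, k), by rw [zero_smul], by tauto⟩

/-! counting homomorphisms -/

def wTriple {m : ℕ} (p : Fin m) (τ : Fin m × Fin m × Fin m) : ℕ :=
  (if τ.1 = p then 1 else 0) + (if τ.2.1 = p then 1 else 0) + (if τ.2.2 = p then 1 else 0)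

def cntHom {m : ℕ} (p : Fin m) : ((Fin m × Fin m × Fin m) →₀ ℕ) →+ ℕ where
  toFun t := t.sum (fun τ n => n * wTriple p τ)
  map_zero' := Finsupp.sum_zero_index
  map_add' := fun t1 t2 => Finsupp.sum_add_index' (h := fun τ n => n * wTriple p τ)
    (fun τ => zero_mul _) (fun τ n1 n2 => add_mul n1 n2 _)

lemma cntHom_apply {m : ℕ} (p : Fin m) (t : (Fin m × Fin m × Fin m) →₀ ℕ) :
    cntHom p t = ∑ τ ∈ t.support, t τ * wTriple p τ := rfl

lemma cntHom_single {m : ℕ} (p : Fin m) (τ : Fin m × Fin m × Fin m) :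
    cntHom p (Finsupp.single τ 1) = wTriple p τ := by
  show (Finsupp.single τ 1).sum (fun τ n => n * wTriple p τ) = wTriple p τ
  rw [Finsupp.sum_single_index (h := fun τ n => n * wTriple p τ) (zero_mul _), one_mul]

def degHom {m : ℕ} : ((Fin m × Fin m × Fin m) →₀ ℕ) →+ ℕ where
  toFun t := t.sum (fun _ n => n)
  map_zero' := Finsupp.sum_zero_index
  map_add' := fun t1 t2 => Finsupp.sum_add_index' (h := fun _ n => n) (fun _ => rfl) (fun _ _ _ => rfl)

lemma degHom_single {m : ℕ} (τ : Fin m × Fin m × Fin m) :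
    degHom (Finsupp.single τ (1 : ℕ)) = 1 := by
  show (Finsupp.single τ 1).sum (fun _ n => n) = 1
  rw [Finsupp.sum_single_index (h := fun _ n => n) rfl]

lemma sum_wTriple {m : ℕ} (τ : Fin m × Fin m × Fin m) : ∑ p : Fin m, wTriple p τ = 3 := by
  unfold wTriple
  rw [Finset.sum_add_distrib, Finset.sum_add_distrib]
  have h : ∀ a : Fin m, (∑ p : Fin m, if a = p then 1 else 0) = 1 := by
    intro a
    rw [Finset.sum_ite_eq Finset.univ a (fun _ => 1), if_pos (Finset.mem_univ a)]
  have h1 : ∀ a : Fin m, (∑ p : Fin m, if (a : Fin m) = p then 1 else 0) = 1 := h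
  calc (∑ p : Fin m, if τ.1 = p then 1 else 0) + (∑ p : Fin m, if τ.2.1 = p then 1 else 0)
        + (∑ p : Fin m, if τ.2.2 = p then 1 else 0) = 1 + 1 + 1 := by rw [h, h, h]
    _ = 3 := rfl

lemma sum_cntHom {m : ℕ} (t : (Fin m × Fin m × Fin m) →₀ ℕ) :
    ∑ p : Fin m, cntHom p t = 3 * degHom t := by
  have h1 : ∀ p, cntHom p t = ∑ τ ∈ t.support, t τ * wTriple p τ := fun p => rfl
  rw [Finset.sum_congr rfl (fun p _ => h1 p), Finset.sum_comm]
  have h2 : degHom t = ∑ τ ∈ t.support, t τ := rfl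
  rw [h2, Finset.mul_sum]
  refine Finset.sum_congr rfl (fun τ _ => ?_)
  rw [← Finset.mul_sum, sum_wTriple, mul_comm]

lemma wTriple_pos {m : ℕ} (x : Fin m) (τ : Fin m × Fin m × Fin m)
    (h : x = τ.1 ∨ x = τ.2.1 ∨ x = τ.2.2) : 1 ≤ wTriple x τ := by
  unfold wTriple
  rcases h with rfl | rfl | rfl <;> split_ifs <;> omega

lemma prod_X_monomial {σT : Type*} {ι : Type*} [DecidableEq σT] (s : Finset ι) (f : ι → σT) :
    (∏ i ∈ s, (MvPolynomial.X (f i) : MvPolynomial σT ℤ))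
      = MvPolynomial.monomial (∑ i ∈ s, Finsupp.single (f i) 1) 1 := by
  classical
  induction s using Finset.cons_induction with
  | empty => simp
  | cons a s ha ih =>
    rw [Finset.prod_cons, Finset.sum_cons, ih, MvPolynomial.X, MvPolynomial.monomial_mul, one_mul]

lemma coeff_structure {d : ℕ}
    (t1 : (Fin (2 * d + 1) × Fin (2 * d + 1) × Fin (2 * d + 1)) →₀ ℕ)
    (h : MvPolynomial.coeff t1 (pfTreePoly d yVar) ≠ 0) :
    degHom t1 = d ∧ ∀ p : Fin (2 * d), 1 ≤ cntHom p.castSucc t1 := by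
  classical
  unfold pfTreePoly pfaffian at h
  rw [MvPolynomial.coeff_sum] at h
  obtain ⟨σ, -, hσ⟩ := Finset.exists_ne_zero_of_sum_ne_zero h
  rw [apply_ite (MvPolynomial.coeff t1)] at hσ
  split_ifs at hσ with hc
  swap
  · rw [MvPolynomial.coeff_zero] at hσ; exact absurd rfl hσ
  rw [MvPolynomial.coeff_smul] at hσ
  have hσ3 : MvPolynomial.coeff t1 (∏ i : Fin d,
      (Matrix.of fun i j : Fin (2 * d) => ∑ k, yVar i.castSucc j.castSucc k)
        (σ (pfLo i)) (σ (pfHi i))) ≠ 0 := by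
    intro h0; rw [h0] at hσ; simp at hσ
  have hexp : (∏ i : Fin d,
      (Matrix.of fun i j : Fin (2 * d) => ∑ k, yVar i.castSucc j.castSucc k)
        (σ (pfLo i)) (σ (pfHi i)))
      = ∑ κ ∈ Fintype.piFinset (fun _ : Fin d => (Finset.univ : Finset (Fin (2 * d + 1)))),
          ∏ i : Fin d, yVar (σ (pfLo i)).castSucc (σ (pfHi i)).castSucc (κ i) := by
    rw [← Finset.prod_univ_sum]
    rfl
  rw [hexp, MvPolynomial.coeff_sum] at hσ3
  obtain ⟨κ, -, hκ⟩ := Finset.exists_ne_zero_of_sum_ne_zero hσ3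
  choose ε τ hyτ hmem using fun i : Fin d =>
    yVar_classify ((σ (pfLo i)).castSucc) ((σ (pfHi i)).castSucc) (κ i)
  rw [Finset.prod_congr rfl (fun i _ => hyτ i)] at hκ
  have hP : (∏ i : Fin d, (ε i • X (τ i) : MvPolynomial _ ℤ))
      = MvPolynomial.C (∏ i : Fin d, ε i)
        * MvPolynomial.monomial (∑ i : Fin d, Finsupp.single (τ i) 1) 1 := by
    rw [Finset.prod_congr rfl
      (fun i (_ : i ∈ Finset.univ) => MvPolynomial.smul_eq_C_mul (X (τ i)) (ε i)),
      Finset.prod_mul_distrib, ← map_prod MvPolynomial.C ε Finset.univ,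
      prod_X_monomial Finset.univ τ]
  rw [hP, MvPolynomial.coeff_C_mul] at hκ
  have ht1 : t1 = ∑ i : Fin d, Finsupp.single (τ i) 1 := by
    by_contra hne
    rw [MvPolynomial.coeff_monomial, if_neg (fun hh => hne hh.symm)] at hκ
    simp at hκ
  constructor
  · rw [ht1, map_sum, Finset.sum_congr rfl (fun i _ => degHom_single (τ i))]
    simp
  · intro p
    obtain ⟨i, b, hq⟩ := pE_surj (σ⁻¹ p)
    have hp : σ (pE (i, b)) = p := by rw [← hq, Equiv.Perm.coe_inv, Equiv.apply_symm_apply]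
    have hmem2 : p.castSucc = (τ i).1 ∨ p.castSucc = (τ i).2.1 ∨ p.castSucc = (τ i).2.2 := by
      apply hmem i
      cases b
      · left; rw [← hp, pE_false]
      · right; left; rw [← hp, pE_true]
    rw [ht1, map_sum]
    calc 1 ≤ cntHom p.castSucc (Finsupp.single (τ i) 1) := by
          rw [cntHom_single]; exact wTriple_pos _ _ hmem2
      _ ≤ ∑ i : Fin d, cntHom p.castSucc (Finsupp.single (τ i) 1) :=
          Finset.single_le_sum (f := fun i => cntHom p.castSucc (Finsupp.single (τ i) 1))
            (fun _ _ => Nat.zero_le _) (Finset.mem_univ i)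

lemma coeff_aeval_kill {σT : Type*} [DecidableEq σT] (bad : σT → Prop) [DecidablePred bad]
    (q : MvPolynomial σT ℤ) (t : σT →₀ ℕ) (ht : ∀ τ ∈ t.support, ¬ bad τ) :
    MvPolynomial.coeff t (MvPolynomial.aeval (fun τ => if bad τ then 0 else MvPolynomial.X τ) q)
      = MvPolynomial.coeff t q := by
  conv_rhs => rw [← MvPolynomial.support_sum_monomial_coeff q]
  conv_lhs => rw [← MvPolynomial.support_sum_monomial_coeff q]
  rw [map_sum, MvPolynomial.coeff_sum, MvPolynomial.coeff_sum]
  refine Finset.sum_congr rfl (fun s _ => ?_)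
  rw [MvPolynomial.aeval_monomial]
  by_cases hs : ∃ τ ∈ s.support, bad τ
  · obtain ⟨τ₀, hτ₀s, hbad⟩ := hs
    have hz : (s.prod fun τ e => (if bad τ then 0 else MvPolynomial.X τ : MvPolynomial σT ℤ) ^ e)
        = 0 := by
      rw [Finsupp.prod]
      refine Finset.prod_eq_zero hτ₀s ?_
      rw [if_pos hbad]
      exact zero_pow (Finsupp.mem_support_iff.mp hτ₀s)
    rw [hz, mul_zero, MvPolynomial.coeff_zero, MvPolynomial.coeff_monomial,
      if_neg (fun hst => (ht τ₀ (by rw [← hst]; exact hτ₀s)) hbad)]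
  · push_neg at hs
    have hgood : (s.prod fun τ e => (if bad τ then 0 else MvPolynomial.X τ : MvPolynomial σT ℤ) ^ e)
        = s.prod fun τ e => (MvPolynomial.X τ) ^ e := by
      rw [Finsupp.prod, Finsupp.prod]
      exact Finset.prod_congr rfl (fun τ hτ => by rw [if_neg (hs τ hτ)])
    rw [hgood, MvPolynomial.algebraMap_eq, ← MvPolynomial.monomial_eq]

lemma map_pfaffian {R S : Type*} [CommRing R] [CommRing S] (φ : R →+* S) {n : ℕ}
    (A : Matrix (Fin (2 * n)) (Fin (2 * n)) R) : φ (pfaffian A) = pfaffian (A.map φ) := by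
  unfold pfaffian
  rw [map_sum]
  refine Finset.sum_congr rfl (fun σ _ => ?_)
  split_ifs with h
  · rw [map_zsmul, map_prod]
    refine congrArg _ (Finset.prod_congr rfl (fun i _ => ?_))
    rw [Matrix.map_apply]
  · exact map_zero φ

noncomputable def killLast (d : ℕ) :
    MvPolynomial (Fin (2 * d + 1) × Fin (2 * d + 1) × Fin (2 * d + 1)) ℤ
      →ₐ[ℤ] MvPolynomial (Fin (2 * d + 1) × Fin (2 * d + 1) × Fin (2 * d + 1)) ℤ :=
  MvPolynomial.aeval (fun τ =>
    if τ.1 = Fin.last (2 * d) ∨ τ.2.1 = Fin.last (2 * d) ∨ τ.2.2 = Fin.last (2 * d) then 0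
    else MvPolynomial.X τ)

lemma killLast_yVar {d : ℕ} (a b c : Fin (2 * d + 1))
    (ha : a ≠ Fin.last (2 * d)) (hb : b ≠ Fin.last (2 * d)) :
    killLast d (yVar a b c)
      = if c = Fin.last (2 * d) then (0 : MvPolynomial _ ℤ) else yVar a b c := by
  unfold killLast yVar
  split_ifs with h1 h2 h3 h4 h5 h6 <;>
    simp_all [MvPolynomial.aeval_X]

lemma pfaffian_eq_zero {R : Type*} [CommRing R] [IsDomain R] [CharZero R] {d : ℕ} (hd : 0 < d)
    (A : Matrix (Fin (2 * d)) (Fin (2 * d)) R)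
    (hskew : ∀ a b, A b a = - A a b) (hcol : ∀ b, ∑ a, A a b = 0) (hrow : ∀ a, ∑ b, A a b = 0) :
    pfaffian A = 0 := by
  have h1 := sum_pfTerm A hskew
  rw [sum_pfTerm_eq_zero hd A hcol hrow] at h1
  have h2 : ((2 ^ d * Nat.factorial d : ℕ) : R) * pfaffian A = 0 := by
    rw [← nsmul_eq_mul, ← h1]
  rcases mul_eq_zero.mp h2 with h | h
  · exact absurd h (Nat.cast_ne_zero.mpr (by positivity))
  · exact h

noncomputable def Bmat (d : ℕ) : Matrix (Fin (2 * d)) (Fin (2 * d))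
    (MvPolynomial (Fin (2 * d + 1) × Fin (2 * d + 1) × Fin (2 * d + 1)) ℤ) :=
  Matrix.of fun i j : Fin (2 * d) =>
    ∑ k : Fin (2 * d), yVar i.castSucc j.castSucc k.castSucc

lemma killLast_pfTreePoly (d : ℕ) :
    killLast d (pfTreePoly d yVar) = pfaffian (Bmat d) := by
  unfold pfTreePoly
  have h := map_pfaffian (killLast d).toRingHom
    (Matrix.of fun i j : Fin (2 * d) => ∑ k, yVar i.castSucc j.castSucc k)
  rw [show ((killLast d).toRingHom (pfaffian (Matrix.of fun i j : Fin (2 * d) => ∑ k, yVar i.castSucc j.castSucc k)))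
    = killLast d (pfaffian (Matrix.of fun i j : Fin (2 * d) => ∑ k, yVar i.castSucc j.castSucc k)) from rfl] at h
  rw [h]
  refine congrArg pfaffian (Matrix.ext (fun i j => ?_))
  rw [Matrix.map_apply]
  show killLast d (∑ k, yVar i.castSucc j.castSucc k)
      = ∑ k : Fin (2 * d), yVar i.castSucc j.castSucc k.castSucc
  rw [map_sum, Fin.sum_univ_castSucc]
  have hlast : killLast d (yVar i.castSucc j.castSucc (Fin.last (2 * d))) = 0 := by
    rw [killLast_yVar _ _ _ (Fin.castSucc_lt_last i).ne (Fin.castSucc_lt_last j).ne, if_pos rfl]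
  rw [hlast, add_zero]
  refine Finset.sum_congr rfl (fun k _ => ?_)
  rw [killLast_yVar _ _ _ (Fin.castSucc_lt_last i).ne (Fin.castSucc_lt_last j).ne,
    if_neg (Fin.castSucc_lt_last k).ne]

lemma mv_two_ne_zero {σT : Type*} : (2 : MvPolynomial σT ℤ) ≠ 0 := by
  have : ((2 : ℕ) : MvPolynomial σT ℤ) ≠ 0 := Nat.cast_ne_zero.mpr (by norm_num)
  simpa using this

lemma double_sum_antisym_zero {σT : Type*} {n : ℕ}
    (f : Fin n → Fin n → MvPolynomial σT ℤ) (hf : ∀ a b, f b a = - f a b) :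
    ∑ a : Fin n, ∑ b : Fin n, f a b = 0 := by
  have h1 : ∑ a : Fin n, ∑ b : Fin n, f a b = ∑ a : Fin n, ∑ b : Fin n, f b a :=
    Finset.sum_comm
  have h2 : ∑ a : Fin n, ∑ b : Fin n, f b a = - ∑ a : Fin n, ∑ b : Fin n, f a b := by
    rw [← Finset.sum_neg_distrib]
    refine Finset.sum_congr rfl (fun a _ => ?_)
    rw [← Finset.sum_neg_distrib]
    exact Finset.sum_congr rfl (fun b _ => hf a b)
  have h3 : ∑ a : Fin n, ∑ b : Fin n, f a b + ∑ a : Fin n, ∑ b : Fin n, f a b = 0 := by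
    nth_rewrite 1 [h1]
    rw [h2]
    ring
  have h4 : (2 : MvPolynomial σT ℤ) * ∑ a : Fin n, ∑ b : Fin n, f a b = 0 := by
    rw [two_mul]; exact h3
  rcases mul_eq_zero.mp h4 with h | h
  · exact absurd h mv_two_ne_zero
  · exact h

lemma Bmat_skew (d : ℕ) : ∀ a b, Bmat d b a = - Bmat d a b := by
  intro a b
  show (∑ k : Fin (2 * d), yVar b.castSucc a.castSucc k.castSucc)
    = - ∑ k : Fin (2 * d), yVar a.castSucc b.castSucc k.castSucc
  rw [← Finset.sum_neg_distrib]
  exact Finset.sum_congr rfl (fun k _ => yswap12' _ _ _)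

lemma Bmat_col (d : ℕ) : ∀ b, ∑ a, Bmat d a b = 0 := by
  intro b
  show ∑ a : Fin (2 * d), ∑ k : Fin (2 * d), yVar a.castSucc b.castSucc k.castSucc = 0
  exact double_sum_antisym_zero _ (fun a k => yswap13' _ _ _)

lemma Bmat_row (d : ℕ) : ∀ a, ∑ b, Bmat d a b = 0 := by
  intro a
  show ∑ b : Fin (2 * d), ∑ k : Fin (2 * d), yVar a.castSucc b.castSucc k.castSucc = 0
  exact double_sum_antisym_zero _ (fun b k => yswap23' _ _ _)

/-- if a monomial (given by its exponent vector `t` on the variables, the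
sorted triples) occurs with nonzero coefficient in `P_m²` (`m = 2d+1 ≥ 3`), then some vertex
`p` occurs exactly twice in the list of all indices of the monomial, counted with
multiplicity. -/
theorem pfTreePoly_sq_exists_index_twice (d : ℕ) (hd : 0 < d)
    (t : (Fin (2 * d + 1) × Fin (2 * d + 1) × Fin (2 * d + 1)) →₀ ℕ)
    (h : MvPolynomial.coeff t (pfTreePoly d yVar * pfTreePoly d yVar) ≠ 0) :
    ∃ p : Fin (2 * d + 1),
      (∑ τ ∈ t.support,
          t τ * ((if τ.1 = p then 1 else 0) + (if τ.2.1 = p then 1 else 0) +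
            (if τ.2.2 = p then 1 else 0))) = 2 := by
  classical
  by_contra hno
  push_neg at hno
  have hno' : ∀ p : Fin (2 * d + 1), cntHom p t ≠ 2 := fun p => hno p
  have h' := h
  rw [MvPolynomial.coeff_mul] at h'
  obtain ⟨⟨t1, t2⟩, hmem, hne⟩ := Finset.exists_ne_zero_of_sum_ne_zero h'
  have ht : t1 + t2 = t := Finset.HasAntidiagonal.mem_antidiagonal.mp hmem
  have h1 : MvPolynomial.coeff t1 (pfTreePoly d yVar) ≠ 0 := fun hz => by
    rw [hz] at hne; simp at hne
  have h2 : MvPolynomial.coeff t2 (pfTreePoly d yVar) ≠ 0 := fun hz => by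
    rw [hz] at hne; simp at hne
  obtain ⟨hdeg1, hcnt1⟩ := coeff_structure t1 h1
  obtain ⟨hdeg2, hcnt2⟩ := coeff_structure t2 h2
  have hdeg : degHom t = 2 * d := by
    rw [← ht, map_add, hdeg1, hdeg2]; ring
  have hcnt3 : ∀ p : Fin (2 * d), 3 ≤ cntHom p.castSucc t := by
    intro p
    have ha := hcnt1 p
    have hb := hcnt2 p
    have hc : cntHom p.castSucc t = cntHom p.castSucc t1 + cntHom p.castSucc t2 := by
      rw [← ht, map_add]
    have hd2 := hno' p.castSucc
    omega
  have hsum := sum_cntHom t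
  rw [hdeg] at hsum
  rw [Fin.sum_univ_castSucc] at hsum
  have hge : 3 * (2 * d) ≤ ∑ p : Fin (2 * d), cntHom p.castSucc t := by
    calc 3 * (2 * d) = (Finset.univ : Finset (Fin (2 * d))).card * 3 := by
          rw [Finset.card_univ, Fintype.card_fin]; ring
      _ ≤ ∑ p : Fin (2 * d), cntHom p.castSucc t := by
          rw [← smul_eq_mul]
          exact Finset.card_nsmul_le_sum Finset.univ _ 3 (fun p _ => hcnt3 p)
  have hlast : cntHom (Fin.last (2 * d)) t = 0 := by omega
  have hgood : ∀ τ ∈ t.support,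
      ¬(τ.1 = Fin.last (2 * d) ∨ τ.2.1 = Fin.last (2 * d) ∨ τ.2.2 = Fin.last (2 * d)) := by
    intro τ hτ hbad
    have hw : 1 ≤ wTriple (Fin.last (2 * d)) τ :=
      wTriple_pos _ τ (hbad.imp Eq.symm (fun hh => hh.imp Eq.symm Eq.symm))
    have htτ : t τ ≠ 0 := Finsupp.mem_support_iff.mp hτ
    have hone : 1 ≤ t τ * wTriple (Fin.last (2 * d)) τ := by
      have h1' : 1 ≤ t τ := Nat.one_le_iff_ne_zero.mpr htτ
      calc 1 = 1 * 1 := rfl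
        _ ≤ t τ * wTriple (Fin.last (2 * d)) τ := Nat.mul_le_mul h1' hw
    have hpos : 1 ≤ cntHom (Fin.last (2 * d)) t := by
      rw [cntHom_apply]
      calc 1 ≤ t τ * wTriple (Fin.last (2 * d)) τ := hone
        _ ≤ _ := Finset.single_le_sum (f := fun τ => t τ * wTriple (Fin.last (2 * d)) τ)
            (fun _ _ => Nat.zero_le _) hτ
    omega
  have hk0 : killLast d (pfTreePoly d yVar * pfTreePoly d yVar) = 0 := by
    rw [map_mul, killLast_pfTreePoly,
      pfaffian_eq_zero hd (Bmat d) (Bmat_skew d) (Bmat_col d) (Bmat_row d), mul_zero]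
  have hcoeff := coeff_aeval_kill
    (fun τ : Fin (2 * d + 1) × Fin (2 * d + 1) × Fin (2 * d + 1) =>
      τ.1 = Fin.last (2 * d) ∨ τ.2.1 = Fin.last (2 * d) ∨ τ.2.2 = Fin.last (2 * d))
    (pfTreePoly d yVar * pfTreePoly d yVar) t hgood
  rw [show (MvPolynomial.aeval fun τ : Fin (2 * d + 1) × Fin (2 * d + 1) × Fin (2 * d + 1) =>
      if τ.1 = Fin.last (2 * d) ∨ τ.2.1 = Fin.last (2 * d) ∨ τ.2.2 = Fin.last (2 * d)
      then 0 else MvPolynomial.X τ) (pfTreePoly d yVar * pfTreePoly d yVar)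
      = killLast d (pfTreePoly d yVar * pfTreePoly d yVar) from rfl, hk0] at hcoeff
  rw [MvPolynomial.coeff_zero] at hcoeff
  exact h hcoeff.symm
end
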